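/- arXiv:1908.10351 — 7 statements merged into one kernel-verified Lean document; each statement's English description precedes it below -/
import Mathlib

section
/- In a bipartite graph G with parts V of size n and U of size m, extended by adding m−k new vertices to the V side and n−k new vertices to the U side (where k ≤ min(m,n)), any perfect matching of the extended graph (which has n+m−k vertices on each side) that maximizes total weight—where edges between an original vertex and a new vertex have weight A strictly greater than the sum of all original edge weights, edges between two new vertices have weight 0, and original edges keep their weights—uses exactly (m−k)+(n−k) edges of weight A. -/
/-- A matching in a (complete) bipartite graph, given as a set of edges (pairs)
that are pairwise disjoint in both coordinates. -/
def IsMatching {α β : Type*} (M : Finset (α × β)) : Prop :=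
  ∀ e ∈ M, ∀ f ∈ M, e ≠ f → e.1 ≠ f.1 ∧ e.2 ≠ f.2

/-- Total weight of a matching. -/
def matchWeight {α β : Type*} (w : α → β → ℝ) (M : Finset (α × β)) : ℝ :=
  ∑ e ∈ M, w e.1 e.2

/-- Weights on the extended bipartite graph: original vertices are the `Sum.inl`s,
new vertices the `Sum.inr`s.  Original edges keep their weight `w`, edges between
an original and a new vertex get weight `A`, edges between two new vertices weight `0`. -/
def extWeight (n m k : ℕ) (w : Fin n → Fin m → ℝ) (A : ℝ) :
    (Fin n ⊕ Fin (m - k)) → (Fin m ⊕ Fin (n - k)) → ℝ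
  | Sum.inl i, Sum.inl j => w i j
  | Sum.inl _, Sum.inr _ => A
  | Sum.inr _, Sum.inl _ => A
  | Sum.inr _, Sum.inr _ => 0

lemma filter_isLeft_card (a b : ℕ) :
    (Finset.univ.filter (fun x : Fin a ⊕ Fin b => x.isLeft = true)).card = a := by
  have : (Finset.univ.filter (fun x : Fin a ⊕ Fin b => x.isLeft = true))
      = Finset.univ.map ⟨Sum.inl, Sum.inl_injective⟩ := by
    ext x; cases x <;> simp
  rw [this]; simp

lemma filter_not_isLeft_card (a b : ℕ) :
    (Finset.univ.filter (fun x : Fin a ⊕ Fin b => ¬ x.isLeft = true)).card = b := by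
  have h := Finset.card_filter_add_card_filter_not
    (s := (Finset.univ : Finset (Fin a ⊕ Fin b))) (p := fun x => x.isLeft = true)
  rw [filter_isLeft_card] at h
  simp only [Finset.card_univ, Fintype.card_sum, Fintype.card_fin] at h
  omega

/-- any maximum-weight perfect matching of the extended graph uses
exactly `(m-k)+(n-k)` edges of weight `A` (edges joining an original and a new vertex). -/
theorem max_perfect_matching_uses_exactly_A_edges
    (n m k : ℕ) (hk : k ≤ min m n)
    (w : Fin n → Fin m → ℝ) (hw : ∀ i j, 0 ≤ w i j)
    (A : ℝ) (hA : (∑ i, ∑ j, w i j) < A)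
    (M : Finset ((Fin n ⊕ Fin (m - k)) × (Fin m ⊕ Fin (n - k))))
    (hMmatch : IsMatching M) (hMperfect : M.card = n + (m - k))
    (hMmax : ∀ M' : Finset ((Fin n ⊕ Fin (m - k)) × (Fin m ⊕ Fin (n - k))),
      IsMatching M' → M'.card = n + (m - k) →
      matchWeight (extWeight n m k w A) M' ≤ matchWeight (extWeight n m k w A) M) :
    (M.filter (fun e => e.1.isLeft ≠ e.2.isLeft)).card = (m - k) + (n - k) := by
  classical
  have hkm : k ≤ m := le_trans hk (min_le_left _ _)
  have hkn : k ≤ n := le_trans hk (min_le_right _ _)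
  have hinj1 : Set.InjOn Prod.fst (M : Set ((Fin n ⊕ Fin (m-k)) × (Fin m ⊕ Fin (n-k)))) := by
    intro e he f hf h
    by_contra hne
    exact (hMmatch e (by exact_mod_cast he) f (by exact_mod_cast hf) hne).1 h
  have hinj2 : Set.InjOn Prod.snd (M : Set ((Fin n ⊕ Fin (m-k)) × (Fin m ⊕ Fin (n-k)))) := by
    intro e he f hf h
    by_contra hne
    exact (hMmatch e (by exact_mod_cast he) f (by exact_mod_cast hf) hne).2 h
  have himg1 : M.image Prod.fst = Finset.univ := by
    apply Finset.eq_univ_of_card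
    rw [Finset.card_image_of_injOn hinj1, hMperfect]
    simp
  have himg2 : M.image Prod.snd = Finset.univ := by
    apply Finset.eq_univ_of_card
    rw [Finset.card_image_of_injOn hinj2, hMperfect]
    simp; omega
  have key1 : ∀ (P : (Fin n ⊕ Fin (m-k)) → Prop) [DecidablePred P],
      (M.filter fun e => P e.1).card = (Finset.univ.filter P).card := by
    intro P _
    rw [← himg1, Finset.filter_image]
    exact (Finset.card_image_of_injOn
      (hinj1.mono (by exact_mod_cast Finset.filter_subset _ _))).symm
  have key2 : ∀ (P : (Fin m ⊕ Fin (n-k)) → Prop) [DecidablePred P],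
      (M.filter fun e => P e.2).card = (Finset.univ.filter P).card := by
    intro P _
    rw [← himg2, Finset.filter_image]
    exact (Finset.card_image_of_injOn
      (hinj2.mono (by exact_mod_cast Finset.filter_subset _ _))).symm
  -- the four counts
  set a := (M.filter fun e => e.1.isLeft = true ∧ e.2.isLeft = true).card with ha
  set b := (M.filter fun e => e.1.isLeft = true ∧ ¬ e.2.isLeft = true).card with hb
  set c := (M.filter fun e => ¬ e.1.isLeft = true ∧ e.2.isLeft = true).card with hc
  set d := (M.filter fun e => ¬ e.1.isLeft = true ∧ ¬ e.2.isLeft = true).card with hd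
  have hab : a + b = n := by
    have h := Finset.card_filter_add_card_filter_not
      (s := M.filter fun e => e.1.isLeft = true) (p := fun e => e.2.isLeft = true)
    rw [Finset.filter_filter, Finset.filter_filter] at h
    rw [key1 (fun x => x.isLeft = true), filter_isLeft_card] at h
    rw [ha, hb]; exact h
  have hac : a + c = m := by
    have h := Finset.card_filter_add_card_filter_not
      (s := M.filter fun e => e.2.isLeft = true) (p := fun e => e.1.isLeft = true)
    rw [Finset.filter_filter, Finset.filter_filter] at h
    rw [key2 (fun x => x.isLeft = true), filter_isLeft_card] at h
    have e1 : (M.filter fun e => e.2.isLeft = true ∧ e.1.isLeft = true)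
        = M.filter fun e => e.1.isLeft = true ∧ e.2.isLeft = true := by
      ext e; simp only [Finset.mem_filter]; tauto
    have e2 : (M.filter fun e => e.2.isLeft = true ∧ ¬ e.1.isLeft = true)
        = M.filter fun e => ¬ e.1.isLeft = true ∧ e.2.isLeft = true := by
      ext e; simp only [Finset.mem_filter]; tauto
    rw [e1, e2] at h
    rw [ha, hc]; exact h
  have hcd : c + d = m - k := by
    have h := Finset.card_filter_add_card_filter_not
      (s := M.filter fun e => ¬ e.1.isLeft = true) (p := fun e => e.2.isLeft = true)
    rw [Finset.filter_filter, Finset.filter_filter] at h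
    rw [key1 (fun x => ¬ x.isLeft = true), filter_not_isLeft_card] at h
    rw [hc, hd]; exact h
  have hgoal : (M.filter (fun e => e.1.isLeft ≠ e.2.isLeft)).card = b + c := by
    have h := Finset.card_filter_add_card_filter_not
      (s := M.filter fun e => e.1.isLeft ≠ e.2.isLeft) (p := fun e => e.1.isLeft = true)
    rw [Finset.filter_filter, Finset.filter_filter] at h
    have e1 : (M.filter fun e => e.1.isLeft ≠ e.2.isLeft ∧ e.1.isLeft = true)
        = M.filter fun e => e.1.isLeft = true ∧ ¬ e.2.isLeft = true := by
      ext e; simp only [Finset.mem_filter]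
      constructor
      · rintro ⟨h1, h2, h3⟩
        refine ⟨h1, h3, fun hc => h2 (by rw [h3, hc])⟩
      · rintro ⟨h1, h2, h3⟩
        exact ⟨h1, fun hc => h3 (h2 ▸ hc.symm ▸ rfl), h2⟩
    have e2 : (M.filter fun e => e.1.isLeft ≠ e.2.isLeft ∧ ¬ e.1.isLeft = true)
        = M.filter fun e => ¬ e.1.isLeft = true ∧ e.2.isLeft = true := by
      ext e; simp only [Finset.mem_filter]
      constructor
      · rintro ⟨h1, h2, h3⟩
        refine ⟨h1, h3, ?_⟩
        cases h4 : e.2.isLeft with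
        | true => rfl
        | false => exact absurd (by cases h5 : e.1.isLeft <;> simp_all) h2
      · rintro ⟨h1, h2, h3⟩
        refine ⟨h1, ?_, h2⟩
        cases h4 : e.1.isLeft <;> simp_all
    rw [e1, e2] at h
    omega
  rw [hgoal]
  -- it suffices to show a ≤ k (omega gives the rest from hab, hac, hcd)
  by_contra hne
  have hak : ¬ a ≤ k := by omega
  -- so a ≥ 1 and d ≥ 1
  have ha1 : 1 ≤ a := by omega
  have hd1 : 1 ≤ d := by omega
  obtain ⟨e₀, he₀⟩ := Finset.card_pos.mp (by rw [← ha]; omega :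
    0 < (M.filter fun e => e.1.isLeft = true ∧ e.2.isLeft = true).card)
  obtain ⟨f₀, hf₀⟩ := Finset.card_pos.mp (by rw [← hd]; omega :
    0 < (M.filter fun e => ¬ e.1.isLeft = true ∧ ¬ e.2.isLeft = true).card)
  rw [Finset.mem_filter] at he₀ hf₀
  obtain ⟨he₀M, he₀1, he₀2⟩ := he₀
  obtain ⟨hf₀M, hf₀1, hf₀2⟩ := hf₀
  obtain ⟨i, hi⟩ := Sum.isLeft_iff.mp he₀1
  obtain ⟨j, hj⟩ := Sum.isLeft_iff.mp he₀2
  obtain ⟨p, hp⟩ := Sum.isRight_iff.mp (Sum.not_isLeft.mp hf₀1)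
  obtain ⟨q, hq⟩ := Sum.isRight_iff.mp (Sum.not_isLeft.mp hf₀2)
  have he₀eq : e₀ = (Sum.inl i, Sum.inl j) := Prod.ext hi hj
  have hf₀eq : f₀ = (Sum.inr p, Sum.inr q) := Prod.ext hp hq
  subst he₀eq hf₀eq
  set g₁ : (Fin n ⊕ Fin (m-k)) × (Fin m ⊕ Fin (n-k)) := (Sum.inl i, Sum.inr q) with hg₁
  set g₂ : (Fin n ⊕ Fin (m-k)) × (Fin m ⊕ Fin (n-k)) := (Sum.inr p, Sum.inl j) with hg₂
  have hef : (Sum.inl i, Sum.inl j) ≠ ((Sum.inr p, Sum.inr q) :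
      (Fin n ⊕ Fin (m-k)) × (Fin m ⊕ Fin (n-k))) := by simp
  set M₀ := (M.erase (Sum.inl i, Sum.inl j)).erase (Sum.inr p, Sum.inr q) with hM₀
  have hmemM₀ : ∀ x, x ∈ M₀ ↔ x ∈ M ∧ x ≠ (Sum.inl i, Sum.inl j) ∧ x ≠ (Sum.inr p, Sum.inr q) := by
    intro x
    simp only [hM₀, Finset.mem_erase]
    tauto
  have hg₁M : g₁ ∉ M := by
    intro hmem
    have hne : g₁ ≠ (Sum.inl i, Sum.inl j) := by simp [hg₁]
    exact (hMmatch g₁ hmem _ he₀M hne).1 rfl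
  have hg₂M : g₂ ∉ M := by
    intro hmem
    have hne : g₂ ≠ (Sum.inl i, Sum.inl j) := by simp [hg₂]
    exact (hMmatch g₂ hmem _ he₀M hne).2 rfl
  have hg₁₂ : g₁ ≠ g₂ := by simp [hg₁, hg₂]
  set M' := insert g₁ (insert g₂ M₀) with hM'
  have hg₂M₀ : g₂ ∉ M₀ := fun h => hg₂M ((hmemM₀ g₂).mp h).1
  have hg₁ins : g₁ ∉ insert g₂ M₀ := by
    simp only [Finset.mem_insert]
    rintro (h | h)
    · exact hg₁₂ h
    · exact hg₁M ((hmemM₀ g₁).mp h).1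
  have hf₀e : (Sum.inr p, Sum.inr q) ∈ M.erase ((Sum.inl i, Sum.inl j) :
      (Fin n ⊕ Fin (m-k)) × (Fin m ⊕ Fin (n-k))) :=
    Finset.mem_erase.mpr ⟨Ne.symm hef, hf₀M⟩
  have hMdecomp : M = insert (Sum.inl i, Sum.inl j) (insert (Sum.inr p, Sum.inr q) M₀) := by
    rw [hM₀, Finset.insert_erase hf₀e, Finset.insert_erase he₀M]
  have hcard₀ : M₀.card + 2 = M.card := by
    rw [hM₀]
    rw [Finset.card_erase_of_mem hf₀e, Finset.card_erase_of_mem he₀M]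
    have : 2 ≤ M.card := Finset.one_lt_card.mpr ⟨_, he₀M, _, hf₀M, hef⟩
    omega
  have hM'card : M'.card = n + (m - k) := by
    rw [hM', Finset.card_insert_of_notMem hg₁ins, Finset.card_insert_of_notMem hg₂M₀]
    omega
  have hM'match : IsMatching M' := by
    intro x hx y hy hxy
    simp only [hM', Finset.mem_insert] at hx hy
    have hM₀fact : ∀ z ∈ M₀, (Sum.inl i : Fin n ⊕ Fin (m-k)) ≠ z.1 ∧
        (Sum.inr p : Fin n ⊕ Fin (m-k)) ≠ z.1 ∧
        (Sum.inl j : Fin m ⊕ Fin (n-k)) ≠ z.2 ∧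
        (Sum.inr q : Fin m ⊕ Fin (n-k)) ≠ z.2 := by
      intro z hz
      obtain ⟨hzM, hz1, hz2⟩ := (hmemM₀ z).mp hz
      have h1 := hMmatch _ he₀M z hzM (Ne.symm hz1)
      have h2 := hMmatch _ hf₀M z hzM (Ne.symm hz2)
      exact ⟨h1.1, h2.1, h1.2, h2.2⟩
    rcases hx with rfl | rfl | hx <;> rcases hy with rfl | rfl | hy
    · exact absurd rfl hxy
    · exact ⟨by simp [hg₁, hg₂], by simp [hg₁, hg₂]⟩
    · exact ⟨(hM₀fact y hy).1, (hM₀fact y hy).2.2.2⟩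
    · exact ⟨by simp [hg₁, hg₂], by simp [hg₁, hg₂]⟩
    · exact absurd rfl hxy
    · exact ⟨(hM₀fact y hy).2.1, (hM₀fact y hy).2.2.1⟩
    · exact ⟨((hM₀fact x hx).1).symm, ((hM₀fact x hx).2.2.2).symm⟩
    · exact ⟨((hM₀fact x hx).2.1).symm, ((hM₀fact x hx).2.2.1).symm⟩
    · obtain ⟨hxM, _, _⟩ := (hmemM₀ x).mp hx
      obtain ⟨hyM, _, _⟩ := (hmemM₀ y).mp hy
      exact hMmatch x hxM y hyM hxy
  -- weights
  have hwM : matchWeight (extWeight n m k w A) M =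
      w i j + (0 + ∑ e ∈ M₀, extWeight n m k w A e.1 e.2) := by
    have hf₀M₀ : ((Sum.inr p, Sum.inr q) : _ × _) ∉ M₀ := Finset.notMem_erase _ _
    have he₀M₀ : ((Sum.inl i, Sum.inl j) : _ × _) ∉ M₀ :=
      fun h => (Finset.mem_erase.mp (Finset.mem_erase.mp h).2).1 rfl
    have he₀ins : ((Sum.inl i, Sum.inl j) : _ × _) ∉ insert (Sum.inr p, Sum.inr q) M₀ := by
      simp only [Finset.mem_insert]
      rintro (h | h)
      · exact hef h
      · exact he₀M₀ h
    rw [matchWeight, hMdecomp, Finset.sum_insert he₀ins, Finset.sum_insert hf₀M₀]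
    rfl
  have hwM' : matchWeight (extWeight n m k w A) M' =
      A + (A + ∑ e ∈ M₀, extWeight n m k w A e.1 e.2) := by
    rw [matchWeight, hM', Finset.sum_insert hg₁ins, Finset.sum_insert hg₂M₀]
    rfl
  have hle := hMmax M' hM'match hM'card
  rw [hwM, hwM'] at hle
  have hwij : w i j ≤ ∑ i', ∑ j', w i' j' := by
    have h1 : w i j ≤ ∑ j', w i j' :=
      Finset.single_le_sum (fun j' _ => hw i j') (Finset.mem_univ j)
    have h2 : (∑ j', w i j') ≤ ∑ i', ∑ j', w i' j' :=
      Finset.single_le_sum (fun i' _ => Finset.sum_nonneg fun j' _ => hw i' j')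
        (Finset.mem_univ i)
    linarith
  have h0A : (0:ℝ) < A := lt_of_le_of_lt (Finset.sum_nonneg fun i' _ =>
    Finset.sum_nonneg fun j' _ => hw i' j') hA
  linarith
end

section
/- With the extended bipartite graph construction (adding m−k new vertices to V and n−k to U, A-weighted edges between original and new vertices with A exceeding the sum of all original weights, 0-weighted edges between new vertices), restricting a maximum-weight perfect matching of the extended graph to its original edges yields a maximum-weight matching of size exactly k among all matchings of the original graph using at most k edges. -/
/-- Restriction of a matching of the extended graph to the original edges. -/
def restrictMatching (n m k : ℕ)
    (M : Finset ((Fin n ⊕ Fin (m - k)) × (Fin m ⊕ Fin (n - k)))) :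
    Finset (Fin n × Fin m) :=
  Finset.univ.filter (fun p : Fin n × Fin m => (Sum.inl p.1, Sum.inl p.2) ∈ M)

open Finset

set_option linter.unusedSectionVars false
section Helpers
variable {α β : Type*} [Fintype α] [Fintype β] [DecidableEq α] [DecidableEq β]

lemma isMatching_image (g : α → β) (hg : Function.Injective g) :
    IsMatching (Finset.univ.image (fun x => (x, g x))) := by
  intro e he f hf hef
  simp only [mem_image, mem_univ, true_and] at he hf
  obtain ⟨x, rfl⟩ := he; obtain ⟨y, rfl⟩ := hf
  refine ⟨fun h => hef (by simp_all), fun h => hef (by simp [hg h])⟩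

lemma card_image_graph (g : α → β) :
    (Finset.univ.image (fun x => (x, g x))).card = Fintype.card α := by
  rw [Finset.card_image_of_injective _ (fun x y h => (Prod.mk.injEq ..).mp h |>.1),
    Finset.card_univ]

lemma weight_image_graph (w : α → β → ℝ) (g : α → β) :
    matchWeight w (Finset.univ.image (fun x => (x, g x))) = ∑ x, w x (g x) := by
  rw [matchWeight, Finset.sum_image]
  intro x _ y _ h
  exact ((Prod.mk.injEq ..).mp h).1

lemma matching_exists_fun (M : Finset (α × β)) (hM : IsMatching M)
    (hcard : M.card = Fintype.card α) (hcard2 : Fintype.card β = Fintype.card α) :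
    ∃ g : α → β, Function.Injective g ∧ Function.Surjective g ∧
      M = Finset.univ.image (fun x => (x, g x)) := by
  have hinj : Set.InjOn Prod.fst (M : Set (α × β)) := by
    intro p hp q hq h
    by_contra hpq
    exact (hM p hp q hq hpq).1 h
  have himg : M.image Prod.fst = univ := by
    apply Finset.eq_univ_of_card
    rw [Finset.card_image_of_injOn (by exact_mod_cast hinj), hcard]
  have hex : ∀ x : α, ∃! p, p ∈ M ∧ p.1 = x := by
    intro x
    have : x ∈ M.image Prod.fst := by rw [himg]; exact mem_univ x
    obtain ⟨p, hp, hpx⟩ := Finset.mem_image.mp this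
    refine ⟨p, ⟨hp, hpx⟩, ?_⟩
    rintro q ⟨hq, hqx⟩
    by_contra hne
    exact (hM q hq p hp hne).1 (hqx.trans hpx.symm)
  set g : α → β := fun x => (M.choose (fun p => p.1 = x) (hex x)).2 with hg
  have hmem : ∀ x, (x, g x) ∈ M := by
    intro x
    have h1 := M.choose_mem (fun p => p.1 = x) (hex x)
    have h2 := M.choose_property (fun p => p.1 = x) (hex x)
    have : (M.choose (fun p => p.1 = x) (hex x)) = (x, g x) := by
      ext <;> simp [hg, h2]
    rwa [this] at h1
  have hginj : Function.Injective g := by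
    intro x y h
    by_contra hxy
    have hne : (x, g x) ≠ (y, g y) := by simp [hxy]
    exact (hM _ (hmem x) _ (hmem y) hne).2 h
  have hMeq : M = Finset.univ.image (fun x => (x, g x)) := by
    apply (Finset.eq_of_subset_of_card_le ?_ ?_).symm
    · intro p hp
      obtain ⟨x, _, rfl⟩ := Finset.mem_image.mp hp
      exact hmem x
    · rw [hcard, card_image_graph]
  refine ⟨g, hginj, ?_, hMeq⟩
  exact ((Fintype.bijective_iff_injective_and_card g).mpr ⟨hginj, hcard2.symm⟩).2

lemma sum_pair_diff (F G : α → ℝ) (p q : α) (hpq : p ≠ q)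
    (h : ∀ x, x ≠ p → x ≠ q → F x = G x) :
    ∑ x, F x = ∑ x, G x + (F p + F q) - (G p + G q) := by
  have key : ∑ x, (F x - G x) = ∑ x ∈ ({p, q} : Finset α), (F x - G x) := by
    refine (Finset.sum_subset (Finset.subset_univ _) ?_).symm
    intro x _ hx
    simp only [Finset.mem_insert, Finset.mem_singleton, not_or] at hx
    rw [h x hx.1 hx.2]; ring
  rw [Finset.sum_sub_distrib, Finset.sum_pair hpq] at key
  linarith

lemma extend_matching (w : α → β → ℝ) (hw : ∀ i j, 0 ≤ w i j) (k : ℕ)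
    (hkn : k ≤ Fintype.card α) (hkm : k ≤ Fintype.card β) :
    ∀ M₀ : Finset (α × β), IsMatching M₀ → M₀.card ≤ k →
    ∃ M₁, IsMatching M₁ ∧ M₁.card = k ∧ matchWeight w M₀ ≤ matchWeight w M₁ := by
  suffices H : ∀ d, ∀ M₀ : Finset (α × β), IsMatching M₀ → M₀.card ≤ k →
      k - M₀.card = d →
      ∃ M₁, IsMatching M₁ ∧ M₁.card = k ∧ matchWeight w M₀ ≤ matchWeight w M₁ by
    exact fun M₀ h1 h2 => H _ M₀ h1 h2 rfl
  intro d
  induction d with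
  | zero =>
    intro M₀ h1 h2 h3
    exact ⟨M₀, h1, le_antisymm h2 (Nat.le_of_sub_eq_zero h3), le_refl _⟩
  | succ d ih =>
    intro M₀ h1 h2 h3
    have hlt : M₀.card < k := by omega
    have hi : ∃ i : α, i ∉ M₀.image Prod.fst := by
      by_contra h
      push_neg at h
      have : (univ : Finset α) ⊆ M₀.image Prod.fst := fun x _ => h x
      have := Finset.card_le_card this
      have := Finset.card_image_le (s := M₀) (f := Prod.fst)
      simp [Finset.card_univ] at *
      omega
    have hj : ∃ j : β, j ∉ M₀.image Prod.snd := by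
      by_contra h
      push_neg at h
      have : (univ : Finset β) ⊆ M₀.image Prod.snd := fun x _ => h x
      have := Finset.card_le_card this
      have := Finset.card_image_le (s := M₀) (f := Prod.snd)
      simp [Finset.card_univ] at *
      omega
    obtain ⟨i, hi⟩ := hi
    obtain ⟨j, hj⟩ := hj
    have hnotmem : (i, j) ∉ M₀ := fun h => hi (Finset.mem_image_of_mem _ h)
    set M₁ := insert (i, j) M₀ with hM₁
    have hmatch : IsMatching M₁ := by
      intro e he f hf hef
      rcases Finset.mem_insert.mp he with rfl | he' <;>
        rcases Finset.mem_insert.mp hf with rfl | hf'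
      · exact absurd rfl hef
      · exact ⟨fun h => hi (by rw [show i = f.1 from h]; exact Finset.mem_image_of_mem _ hf'),
          fun h => hj (by rw [show j = f.2 from h]; exact Finset.mem_image_of_mem _ hf')⟩
      · exact ⟨fun h => hi (by rw [show i = e.1 from h.symm]; exact Finset.mem_image_of_mem _ he'),
          fun h => hj (by rw [show j = e.2 from h.symm]; exact Finset.mem_image_of_mem _ he')⟩
      · exact h1 e he' f hf' hef
    have hcard : M₁.card = M₀.card + 1 := Finset.card_insert_of_notMem hnotmem
    have hwt : matchWeight w M₀ ≤ matchWeight w M₁ := by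
      simp only [hM₁, matchWeight, Finset.sum_insert hnotmem]
      have := hw i j
      linarith
    obtain ⟨M₂, a1, a2, a3⟩ := ih M₁ hmatch (by omega) (by omega)
    exact ⟨M₂, a1, a2, le_trans hwt a3⟩

end Helpers


/-- restricting a maximum-weight perfect matching of the extended graph
to the original edges yields a matching with exactly `k` edges which has maximum
weight among all matchings of the original graph with at most `k` edges. -/
theorem restriction_solves_k_cardinality
    (n m k : ℕ) (hk : k ≤ min m n)
    (w : Fin n → Fin m → ℝ) (hw : ∀ i j, 0 ≤ w i j)
    (A : ℝ) (hA : (∑ i, ∑ j, w i j) < A)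
    (M : Finset ((Fin n ⊕ Fin (m - k)) × (Fin m ⊕ Fin (n - k))))
    (hMmatch : IsMatching M) (hMperfect : M.card = n + (m - k))
    (hMmax : ∀ M' : Finset ((Fin n ⊕ Fin (m - k)) × (Fin m ⊕ Fin (n - k))),
      IsMatching M' → M'.card = n + (m - k) →
      matchWeight (extWeight n m k w A) M' ≤ matchWeight (extWeight n m k w A) M) :
    IsMatching (restrictMatching n m k M) ∧
    (restrictMatching n m k M).card = k ∧
    (∀ M₀ : Finset (Fin n × Fin m), IsMatching M₀ → M₀.card ≤ k →
      matchWeight w M₀ ≤ matchWeight w (restrictMatching n m k M)) := by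
  have hkm : k ≤ m := le_trans hk (min_le_left _ _)
  have hkn : k ≤ n := le_trans hk (min_le_right _ _)
  have hS0 : (0:ℝ) ≤ ∑ i, ∑ j, w i j :=
    Finset.sum_nonneg fun i _ => Finset.sum_nonneg fun j _ => hw i j
  have hwle : ∀ i j, w i j ≤ ∑ i, ∑ j, w i j := by
    intro i j
    calc w i j ≤ ∑ j', w i j' :=
          Finset.single_le_sum (fun j' _ => hw i j') (mem_univ j)
      _ ≤ ∑ i', ∑ j', w i' j' :=
          Finset.single_le_sum (f := fun i' => ∑ j', w i' j')
            (fun i' _ => Finset.sum_nonneg fun j' _ => hw i' j') (mem_univ i)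
  have hcardL : Fintype.card (Fin n ⊕ Fin (m-k)) = n + (m - k) := by simp
  have hcardR : Fintype.card (Fin m ⊕ Fin (n-k)) = n + (m - k) := by simp; omega
  obtain ⟨f, hfinj, hfsurj, hfM⟩ :=
    matching_exists_fun M hMmatch (by rw [hMperfect, hcardL]) (by rw [hcardR, hcardL])
  set W := extWeight n m k w A with hW
  set S := univ.filter (fun i : Fin n => (f (Sum.inl i)).isLeft = true) with hSdef
  set T := univ.filter (fun u : Fin (m-k) => (f (Sum.inr u)).isLeft = true) with hTdef
  have h1 : (univ.filter (fun y : Fin m ⊕ Fin (n-k) => y.isLeft = true)).card = m := by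
    rw [Finset.card_filter, Fintype.sum_sum_type]
    simp
  have h2 : (univ.filter (fun x : Fin n ⊕ Fin (m-k) => (f x).isLeft = true)).card = m := by
    refine Finset.card_bij (fun x _ => f x) ?_ ?_ ?_ |>.trans h1
    · intro a ha
      simp only [mem_filter, mem_univ, true_and] at ha ⊢
      exact ha
    · intro a _ b _ h
      exact hfinj h
    · intro b hb
      obtain ⟨a, rfl⟩ := hfsurj b
      exact ⟨a, by simpa using hb, rfl⟩
  have h3 : S.card + T.card = m := by
    have hh : (univ.filter (fun x : Fin n ⊕ Fin (m-k) => (f x).isLeft = true)).card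
        = S.card + T.card := by
      simp only [hSdef, hTdef, Finset.card_filter]
      rw [Fintype.sum_sum_type]
    omega
  have hTle : T.card ≤ m - k := le_trans (Finset.card_filter_le _ _) (by simp)
  have hTc : (univ.filter (fun u : Fin (m-k) => ¬((f (Sum.inr u)).isLeft = true))).card
      = (m - k) - T.card := by
    rw [Finset.filter_not, Finset.card_sdiff_of_subset (Finset.filter_subset _ _), Finset.card_univ,
      Fintype.card_fin, hTdef]
  have hSc : (univ.filter (fun i : Fin n => ¬((f (Sum.inl i)).isLeft = true))).card
      = n - S.card := by
    rw [Finset.filter_not, Finset.card_sdiff_of_subset (Finset.filter_subset _ _), Finset.card_univ,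
      Fintype.card_fin, hSdef]
  have hSk : S.card = k := by
    have hge : k ≤ S.card := by omega
    have hle : S.card ≤ k := by
      by_contra hc
      push_neg at hc
      obtain ⟨i₀, hi₀⟩ := Finset.card_pos.mp (show 0 < S.card by omega)
      obtain ⟨j₀, hj₀⟩ := Sum.isLeft_iff.mp (Finset.mem_filter.mp hi₀).2
      have hTcne : (univ.filter (fun u : Fin (m-k) =>
          ¬((f (Sum.inr u)).isLeft = true))).Nonempty := by
        apply Finset.card_pos.mp
        have hcu : (univ : Finset (Fin (m-k))).card = m - k := by simp
        omega
      obtain ⟨u₀, hu₀⟩ := hTcne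
      have hu₀' : (f (Sum.inr u₀)).isRight = true := by
        have := (Finset.mem_filter.mp hu₀).2
        simpa [Sum.not_isLeft] using this
      obtain ⟨v₀, hv₀⟩ := Sum.isRight_iff.mp hu₀'
      set σ := Equiv.swap (Sum.inl i₀ : Fin n ⊕ Fin (m-k)) (Sum.inr u₀) with hσ
      have hginj : Function.Injective (fun x => f (σ x)) := hfinj.comp σ.injective
      have hMax := hMmax (univ.image (fun x => (x, f (σ x))))
        (isMatching_image _ hginj) (by rw [card_image_graph, hcardL])
      rw [weight_image_graph] at hMax
      rw [hfM, weight_image_graph] at hMax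
      have hre : ∑ x, W x (f (σ x)) = ∑ y, W (σ y) (f y) :=
        (Fintype.sum_equiv σ (fun y => W (σ y) (f y)) (fun x => W x (f (σ x)))
          (fun y => by
            show W (σ y) (f y) = W (σ y) (f (σ (σ y)))
            rw [hσ, Equiv.swap_apply_self])).symm
      rw [hre] at hMax
      have hpq : (Sum.inl i₀ : Fin n ⊕ Fin (m-k)) ≠ Sum.inr u₀ := by simp
      have hkey := sum_pair_diff (fun y => W (σ y) (f y)) (fun y => W y (f y))
        (Sum.inl i₀) (Sum.inr u₀) hpq
        (fun x hx1 hx2 => by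
          show W (σ x) (f x) = W x (f x)
          rw [hσ, Equiv.swap_apply_of_ne_of_ne hx1 hx2])
      rw [hkey] at hMax
      simp only [hσ, Equiv.swap_apply_left, Equiv.swap_apply_right, hj₀, hv₀] at hMax
      have e1 : W (Sum.inr u₀) (Sum.inl j₀) = A := rfl
      have e2 : W (Sum.inl i₀) (Sum.inr v₀) = A := rfl
      have e3 : W (Sum.inl i₀) (Sum.inl j₀) = w i₀ j₀ := rfl
      have e4 : W (Sum.inr u₀) (Sum.inr v₀) = 0 := rfl
      rw [e1, e2, e3, e4] at hMax
      have := hwle i₀ j₀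
      linarith
    omega
  have hall : ∀ u : Fin (m-k), ∃ j, f (Sum.inr u) = Sum.inl j := by
    intro u
    by_contra hcon
    have hmem : u ∈ univ.filter (fun u : Fin (m-k) => ¬((f (Sum.inr u)).isLeft = true)) := by
      simp only [mem_filter, mem_univ, true_and]
      intro hisl
      exact hcon (Sum.isLeft_iff.mp hisl)
    have hc0 : (univ.filter (fun u : Fin (m-k) =>
        ¬((f (Sum.inr u)).isLeft = true))).card = 0 := by
      have hcu : (univ : Finset (Fin (m-k))).card = m - k := by simp
      omega
    rw [Finset.card_eq_zero] at hc0
    rw [hc0] at hmem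
    exact absurd hmem (Finset.notMem_empty u)
  have hmemM : ∀ (i : Fin n) (j : Fin m),
      ((Sum.inl i, Sum.inl j) ∈ M) ↔ f (Sum.inl i) = Sum.inl j := by
    intro i j
    rw [hfM]
    simp only [mem_image, mem_univ, true_and, Prod.mk.injEq]
    constructor
    · rintro ⟨x, hx1, hx2⟩
      rw [← hx1]; exact hx2
    · intro h
      exact ⟨Sum.inl i, rfl, h⟩
  have hrmem : ∀ p : Fin n × Fin m,
      p ∈ restrictMatching n m k M ↔ f (Sum.inl p.1) = Sum.inl p.2 := by
    intro p
    rw [restrictMatching, Finset.mem_filter]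
    simp [hmemM]
  have hrmatch : IsMatching (restrictMatching n m k M) := by
    intro e he e' he' hne
    have h1 := (hrmem e).mp he
    have h2 := (hrmem e').mp he'
    constructor
    · intro h
      apply hne
      have : (Sum.inl e.2 : Fin m ⊕ Fin (n-k)) = Sum.inl e'.2 := by rw [← h1, ← h2, h]
      exact Prod.ext h (Sum.inl_injective this)
    · intro h
      apply hne
      have : f (Sum.inl e.1) = f (Sum.inl e'.1) := by rw [h1, h2, h]
      exact Prod.ext (Sum.inl_injective (hfinj this)) h
  have hrcard : (restrictMatching n m k M).card = k := by
    refine (Finset.card_bij (fun p _ => p.1) ?_ ?_ ?_).trans hSk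
    · intro p hp
      have := (hrmem p).mp hp
      simp only [hSdef, mem_filter, mem_univ, true_and, this, Sum.isLeft_inl]
    · intro p hp q hq h
      replace h : p.1 = q.1 := h
      have h1 := (hrmem p).mp hp
      have h2 := (hrmem q).mp hq
      rw [h] at h1
      rw [h2] at h1
      exact Prod.ext h (Sum.inl_injective h1.symm)
    · intro i hi
      obtain ⟨j, hj⟩ := Sum.isLeft_iff.mp (Finset.mem_filter.mp hi).2
      exact ⟨(i, j), (hrmem (i, j)).mpr hj, rfl⟩
  have hWM : matchWeight W M =
      matchWeight w (restrictMatching n m k M) + (((n-k:ℕ):ℝ) * A + ((m-k:ℕ):ℝ) * A) := by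
    have hstep : matchWeight W M = ∑ x, W x (f x) := by
      conv_lhs => rw [hfM]
      rw [weight_image_graph]
    rw [hstep, Fintype.sum_sum_type]
    have hright : ∑ u : Fin (m-k), W (Sum.inr u) (f (Sum.inr u)) = ((m-k:ℕ):ℝ) * A := by
      rw [Finset.sum_congr rfl (fun u _ => by obtain ⟨j, hj⟩ := hall u; rw [hj]; rfl)]
      rw [Finset.sum_const, card_univ, Fintype.card_fin, nsmul_eq_mul]
    have hleft : ∑ i : Fin n, W (Sum.inl i) (f (Sum.inl i)) =
        matchWeight w (restrictMatching n m k M) + ((n-k:ℕ):ℝ) * A := by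
      rw [← Finset.sum_filter_add_sum_filter_not univ
        (fun i : Fin n => (f (Sum.inl i)).isLeft = true)]
      have hp1 : ∑ i ∈ S, W (Sum.inl i) (f (Sum.inl i)) =
          matchWeight w (restrictMatching n m k M) := by
        rw [matchWeight]
        refine (Finset.sum_bij (fun p _ => p.1) ?_ ?_ ?_ ?_).symm
        · intro p hp
          have := (hrmem p).mp hp
          simp only [hSdef, mem_filter, mem_univ, true_and, this, Sum.isLeft_inl]
        · intro p hp q hq h
          replace h : p.1 = q.1 := h
          have h1 := (hrmem p).mp hp
          have h2 := (hrmem q).mp hq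
          rw [h, h2] at h1
          exact Prod.ext h (Sum.inl_injective h1.symm)
        · intro i hi
          obtain ⟨j, hj⟩ := Sum.isLeft_iff.mp (Finset.mem_filter.mp hi).2
          exact ⟨(i, j), (hrmem (i, j)).mpr hj, rfl⟩
        · intro p hp
          rw [(hrmem p).mp hp]
          rfl
      have hp2 : ∑ i ∈ univ.filter (fun i : Fin n => ¬((f (Sum.inl i)).isLeft = true)),
          W (Sum.inl i) (f (Sum.inl i)) = ((n-k:ℕ):ℝ) * A := by
        have hterm : ∀ i ∈ univ.filter (fun i : Fin n => ¬((f (Sum.inl i)).isLeft = true)),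
            W (Sum.inl i) (f (Sum.inl i)) = A := by
          intro i hi
          have := (Finset.mem_filter.mp hi).2
          obtain ⟨t, ht⟩ := Sum.isRight_iff.mp (by simpa [Sum.not_isLeft] using this)
          rw [ht]; rfl
        rw [Finset.sum_congr rfl hterm, Finset.sum_const, nsmul_eq_mul]
        rw [hSc, hSk]
      rw [hp1, hp2]
    rw [hright, hleft, matchWeight]
    ring
  refine ⟨hrmatch, hrcard, ?_⟩
  have hbound : ∀ M₁ : Finset (Fin n × Fin m), IsMatching M₁ → M₁.card = k →
      matchWeight w M₁ ≤ matchWeight w (restrictMatching n m k M) := by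
    intro M₁ h1 h2
    set P := M₁.image Prod.fst with hPdef
    set Q := M₁.image Prod.snd with hQdef
    have hPinj : ∀ x ∈ M₁, ∀ y ∈ M₁, x.1 = y.1 → x = y := by
      intro x hx y hy hxy
      by_contra hne
      exact (h1 x hx y hy hne).1 hxy
    have hQinj : ∀ x ∈ M₁, ∀ y ∈ M₁, x.2 = y.2 → x = y := by
      intro x hx y hy hxy
      by_contra hne
      exact (h1 x hx y hy hne).2 hxy
    have hPcard : P.card = k := by
      have hh : P.card = M₁.card :=
        Finset.card_image_of_injOn (fun x hx y hy h => hPinj x hx y hy h)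
      omega
    have hQcard : Q.card = k := by
      have hh : Q.card = M₁.card :=
        Finset.card_image_of_injOn (fun x hx y hy h => hQinj x hx y hy h)
      omega
    have hPc : (Pᶜ).card = n - k := by
      rw [Finset.card_compl, hPcard, Fintype.card_fin]
    have hQc : (Qᶜ).card = m - k := by
      rw [Finset.card_compl, hQcard, Fintype.card_fin]
    let eL : (Pᶜ : Finset (Fin n)) ≃ Fin (n - k) := (Pᶜ).equivFin.trans (finCongr hPc)
    let eR : Fin (m - k) ≃ (Qᶜ : Finset (Fin m)) := ((Qᶜ).equivFin.trans (finCongr hQc)).symm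
    have hexu : ∀ i ∈ P, ∃! p, p ∈ M₁ ∧ p.1 = i := by
      intro i hi
      obtain ⟨p, hp, hpx⟩ := Finset.mem_image.mp hi
      refine ⟨p, ⟨hp, hpx⟩, ?_⟩
      rintro q ⟨hq, hqx⟩
      exact hPinj q hq p hp (hqx.trans hpx.symm)
    classical
    set ptr : ∀ i ∈ P, Fin m := fun i hi => (M₁.choose (fun p => p.1 = i) (hexu i hi)).2
      with hptrdef
    have hptrm : ∀ i (hi : i ∈ P), (i, ptr i hi) ∈ M₁ := by
      intro i hi
      have hc1 := M₁.choose_mem (fun p => p.1 = i) (hexu i hi)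
      have hc2 := M₁.choose_property (fun p => p.1 = i) (hexu i hi)
      have : (M₁.choose (fun p => p.1 = i) (hexu i hi)) = (i, ptr i hi) := by
        ext <;> simp [hptrdef, hc2]
      rwa [this] at hc1
    have hptru : ∀ p ∈ M₁, ∀ hi : p.1 ∈ P, ptr p.1 hi = p.2 := by
      intro p hp hi
      have := hPinj _ (hptrm p.1 hi) p hp rfl
      simpa using congrArg Prod.snd this
    have hptrQ : ∀ i (hi : i ∈ P), ptr i hi ∈ Q := by
      intro i hi
      exact Finset.mem_image_of_mem Prod.snd (M₁.choose_mem (fun p => p.1 = i) (hexu i hi))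
    set g : (Fin n ⊕ Fin (m-k)) → (Fin m ⊕ Fin (n-k)) :=
      Sum.elim
        (fun i => if h : i ∈ P then Sum.inl (ptr i h)
          else Sum.inr (eL ⟨i, Finset.mem_compl.mpr h⟩))
        (fun u => Sum.inl ((eR u : (Qᶜ : Finset (Fin m))) : Fin m)) with hgdef
    have hginj : Function.Injective g := by
      intro x y hxy
      rcases x with i | u <;> rcases y with i' | u' <;>
        simp only [hgdef, Sum.elim_inl, Sum.elim_inr] at hxy
      · by_cases h : i ∈ P <;> by_cases h' : i' ∈ P
        · rw [dif_pos h, dif_pos h'] at hxy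
          have hpe : ptr i h = ptr i' h' := Sum.inl_injective hxy
          have heq : (i, ptr i h) = (i', ptr i' h') := by
            by_contra hne
            exact (h1 _ (hptrm i h) _ (hptrm i' h') hne).2 hpe
          rw [(Prod.mk.injEq ..).mp heq |>.1]
        · rw [dif_pos h, dif_neg h'] at hxy
          exact absurd hxy (by simp)
        · rw [dif_neg h, dif_pos h'] at hxy
          exact absurd hxy (by simp)
        · rw [dif_neg h, dif_neg h'] at hxy
          have h5 : i = i' := by
            simpa using congrArg Subtype.val (eL.injective (Sum.inr_injective hxy))
          rw [h5]
      · by_cases h : i ∈ P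
        · rw [dif_pos h] at hxy
          have hpe : ptr i h = ((eR u' : (Qᶜ : Finset (Fin m))) : Fin m) :=
            Sum.inl_injective hxy
          have h1' := hptrQ i h
          have h2' := (eR u').2
          rw [Finset.mem_compl] at h2'
          rw [hpe] at h1'
          exact absurd h1' h2'
        · rw [dif_neg h] at hxy
          exact absurd hxy (by simp)
      · by_cases h : i' ∈ P
        · rw [dif_pos h] at hxy
          have hpe : ((eR u : (Qᶜ : Finset (Fin m))) : Fin m) = ptr i' h :=
            Sum.inl_injective hxy
          have h1' := hptrQ i' h
          have h2' := (eR u).2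
          rw [Finset.mem_compl] at h2'
          rw [← hpe] at h1'
          exact absurd h1' h2'
        · rw [dif_neg h] at hxy
          exact absurd hxy (by simp)
      · have h5 : u = u' := eR.injective (Subtype.ext (Sum.inl_injective hxy))
        rw [h5]
    have hMax := hMmax (univ.image (fun x => (x, g x)))
      (isMatching_image _ hginj) (by rw [card_image_graph, hcardL])
    rw [weight_image_graph, hWM, Fintype.sum_sum_type] at hMax
    have hr : ∑ u : Fin (m-k), W (Sum.inr u) (g (Sum.inr u)) = ((m-k:ℕ):ℝ) * A := by
      rw [Finset.sum_congr rfl (fun u _ => by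
        show W (Sum.inr u) (g (Sum.inr u)) = A
        simp only [hgdef, Sum.elim_inr]
        rfl)]
      rw [Finset.sum_const, card_univ, Fintype.card_fin, nsmul_eq_mul]
    have hl : ∑ i : Fin n, W (Sum.inl i) (g (Sum.inl i)) =
        matchWeight w M₁ + ((n-k:ℕ):ℝ) * A := by
      rw [← Finset.sum_add_sum_compl P (fun i => W (Sum.inl i) (g (Sum.inl i)))]
      have hp1 : ∑ i ∈ P, W (Sum.inl i) (g (Sum.inl i)) = matchWeight w M₁ := by
        rw [hPdef, Finset.sum_image (fun x hx y hy h => hPinj x hx y hy h), matchWeight]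
        apply Finset.sum_congr rfl
        intro p hp
        have hi : p.1 ∈ P := Finset.mem_image_of_mem Prod.fst hp
        have : g (Sum.inl p.1) = Sum.inl (ptr p.1 hi) := by
          simp only [hgdef, Sum.elim_inl, dif_pos hi]
        rw [this, hptru p hp hi]
        rfl
      have hp2 : ∑ i ∈ Pᶜ, W (Sum.inl i) (g (Sum.inl i)) = ((n-k:ℕ):ℝ) * A := by
        rw [Finset.sum_congr rfl (fun i hi => by
          show W (Sum.inl i) (g (Sum.inl i)) = A
          have h := Finset.mem_compl.mp hi
          simp only [hgdef, Sum.elim_inl, dif_neg h]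
          rfl)]
        rw [Finset.sum_const, hPc, nsmul_eq_mul]
      rw [hp1, hp2]
    rw [hr, hl] at hMax
    linarith
  intro M₀ h₁ h₂
  obtain ⟨M₁, a1, a2, a3⟩ := extend_matching w hw k
    (by simp [hkn]) (by simp [hkm]) M₀ h₁ h₂
  exact le_trans a3 (hbound M₁ a1 a2)
end

section
/- For any matching M of the extended graph containing fewer than (m−k)+(n−k) edges of weight A, there exists another matching M' whose total weight is strictly larger, obtained by replacing or adding an A-weighted edge; hence M is not of maximum weight. -/
open Finset

lemma card_filter_fst_eq {α β : Type*} [DecidableEq α] [DecidableEq β] [Fintype α]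
    (M : Finset (α × β)) (hinj : Set.InjOn Prod.fst (M : Set (α × β)))
    (hcard : M.card = Fintype.card α) (p : α → Prop) [DecidablePred p] :
    (M.filter fun e => p e.1).card = (Finset.univ.filter p).card := by
  have himg : M.image Prod.fst = Finset.univ :=
    Finset.eq_univ_of_card _ (by rw [Finset.card_image_of_injOn hinj, hcard])
  have h1 : ((M.filter fun e => p e.1).image Prod.fst).card
      = (M.filter fun e => p e.1).card :=
    Finset.card_image_of_injOn (hinj.mono (by exact_mod_cast Finset.filter_subset _ M))
  rw [← h1, ← Finset.filter_image, himg]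

lemma card_filter_snd_eq {α β : Type*} [DecidableEq α] [DecidableEq β] [Fintype β]
    (M : Finset (α × β)) (hinj : Set.InjOn Prod.snd (M : Set (α × β)))
    (hcard : M.card = Fintype.card β) (p : β → Prop) [DecidablePred p] :
    (M.filter fun e => p e.2).card = (Finset.univ.filter p).card := by
  have himg : M.image Prod.snd = Finset.univ :=
    Finset.eq_univ_of_card _ (by rw [Finset.card_image_of_injOn hinj, hcard])
  have h1 : ((M.filter fun e => p e.2).image Prod.snd).card
      = (M.filter fun e => p e.2).card :=
    Finset.card_image_of_injOn (hinj.mono (by exact_mod_cast Finset.filter_subset _ M))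
  rw [← h1, ← Finset.filter_image, himg]

lemma card_filter_isLeft_true {α β : Type*} [Fintype α] [Fintype β] [DecidableEq α]
    [DecidableEq β] :
    ((Finset.univ : Finset (α ⊕ β)).filter fun x => x.isLeft = true).card = Fintype.card α := by
  have : ((Finset.univ : Finset (α ⊕ β)).filter fun x => x.isLeft = true)
      = Finset.univ.map ⟨Sum.inl, Sum.inl_injective⟩ := by
    ext x; cases x <;> simp
  rw [this, Finset.card_map, Finset.card_univ]

lemma card_filter_isLeft_false {α β : Type*} [Fintype α] [Fintype β] [DecidableEq α]
    [DecidableEq β] :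
    ((Finset.univ : Finset (α ⊕ β)).filter fun x => x.isLeft = false).card = Fintype.card β := by
  have : ((Finset.univ : Finset (α ⊕ β)).filter fun x => x.isLeft = false)
      = Finset.univ.map ⟨Sum.inr, Sum.inr_injective⟩ := by
    ext x; cases x <;> simp
  rw [this, Finset.card_map, Finset.card_univ]

/-- if a (perfect) matching of the extended graph contains fewer than
`(m-k)+(n-k)` edges of weight `A`, then there is another (perfect) matching of
strictly larger total weight; hence it is not of maximum weight. -/
theorem few_A_edges_not_maximum
    (n m k : ℕ) (hk : k ≤ min m n)
    (w : Fin n → Fin m → ℝ) (hw : ∀ i j, 0 ≤ w i j)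
    (A : ℝ) (hA : (∑ i, ∑ j, w i j) < A)
    (M : Finset ((Fin n ⊕ Fin (m - k)) × (Fin m ⊕ Fin (n - k))))
    (hMmatch : IsMatching M) (hMperfect : M.card = n + (m - k))
    (hfew : (M.filter (fun e => e.1.isLeft ≠ e.2.isLeft)).card < (m - k) + (n - k)) :
    ∃ M' : Finset ((Fin n ⊕ Fin (m - k)) × (Fin m ⊕ Fin (n - k))),
      IsMatching M' ∧ M'.card = n + (m - k) ∧
      matchWeight (extWeight n m k w A) M < matchWeight (extWeight n m k w A) M' := by
  classical
  set w' := extWeight n m k w A with hw'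
  -- injectivity of the two projections on M
  have hinj1 : Set.InjOn Prod.fst
      (M : Set ((Fin n ⊕ Fin (m - k)) × (Fin m ⊕ Fin (n - k)))) := by
    intro e he f hf hef
    by_contra hne
    exact (hMmatch e (by exact_mod_cast he) f (by exact_mod_cast hf) hne).1 hef
  have hinj2 : Set.InjOn Prod.snd
      (M : Set ((Fin n ⊕ Fin (m - k)) × (Fin m ⊕ Fin (n - k)))) := by
    intro e he f hf hef
    by_contra hne
    exact (hMmatch e (by exact_mod_cast he) f (by exact_mod_cast hf) hne).2 hef
  have hcard1 : M.card = Fintype.card (Fin n ⊕ Fin (m - k)) := by simp [hMperfect]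
  have hcard2 : M.card = Fintype.card (Fin m ⊕ Fin (n - k)) := by
    simp only [Fintype.card_sum, Fintype.card_fin, hMperfect]
    omega
  -- cards of the four classes of edges
  set c11 := (M.filter fun e => e.1.isLeft = true ∧ e.2.isLeft = true).card with hc11
  set c12 := (M.filter fun e => e.1.isLeft = true ∧ e.2.isLeft = false).card with hc12
  set c21 := (M.filter fun e => e.1.isLeft = false ∧ e.2.isLeft = true).card with hc21
  set c22 := (M.filter fun e => e.1.isLeft = false ∧ e.2.isLeft = false).card with hc22
  have E1 : c11 + c12 = n := by
    have h := Finset.card_filter_add_card_filter_not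
      (s := M.filter fun e => e.1.isLeft = true) (p := fun e => e.2.isLeft = true)
    simp only [Finset.filter_filter, Bool.not_eq_true] at h
    have h2 := card_filter_fst_eq M hinj1 hcard1 (fun x => x.isLeft = true)
    rw [card_filter_isLeft_true] at h2
    simp only [Fintype.card_fin] at h2
    rw [hc11, hc12, h, h2]
  have E2 : c21 + c22 = m - k := by
    have h := Finset.card_filter_add_card_filter_not
      (s := M.filter fun e => e.1.isLeft = false) (p := fun e => e.2.isLeft = true)
    simp only [Finset.filter_filter, Bool.not_eq_true] at h
    have h2 := card_filter_fst_eq M hinj1 hcard1 (fun x => x.isLeft = false)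
    rw [card_filter_isLeft_false] at h2
    simp only [Fintype.card_fin] at h2
    rw [hc21, hc22, h, h2]
  have E3 : c12 + c22 = n - k := by
    have h := Finset.card_filter_add_card_filter_not
      (s := M.filter fun e => e.2.isLeft = false) (p := fun e => e.1.isLeft = true)
    simp only [Finset.filter_filter, Bool.not_eq_true] at h
    have h2 := card_filter_snd_eq M hinj2 hcard2 (fun x => x.isLeft = false)
    rw [card_filter_isLeft_false] at h2
    simp only [Fintype.card_fin] at h2
    have e12 : (M.filter fun e => e.2.isLeft = false ∧ e.1.isLeft = true)
        = M.filter fun e => e.1.isLeft = true ∧ e.2.isLeft = false :=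
      Finset.filter_congr fun e _ => and_comm
    have e22 : (M.filter fun e => e.2.isLeft = false ∧ e.1.isLeft = false)
        = M.filter fun e => e.1.isLeft = false ∧ e.2.isLeft = false :=
      Finset.filter_congr fun e _ => and_comm
    rw [e12, e22] at h
    rw [hc12, hc22, h, h2]
  have E4 : c12 + c21 < (m - k) + (n - k) := by
    have h := Finset.card_filter_add_card_filter_not
      (s := M.filter fun e => e.1.isLeft ≠ e.2.isLeft) (p := fun e => e.1.isLeft = true)
    simp only [Finset.filter_filter, Bool.not_eq_true] at h
    have e12 : (M.filter fun e => (e.1.isLeft ≠ e.2.isLeft) ∧ e.1.isLeft = true)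
        = M.filter fun e => e.1.isLeft = true ∧ e.2.isLeft = false :=
      Finset.filter_congr fun e _ => by
        cases h1 : e.1.isLeft <;> cases h2 : e.2.isLeft <;> simp [h1, h2]
    have e21 : (M.filter fun e => (e.1.isLeft ≠ e.2.isLeft) ∧ e.1.isLeft = false)
        = M.filter fun e => e.1.isLeft = false ∧ e.2.isLeft = true :=
      Finset.filter_congr fun e _ => by
        cases h1 : e.1.isLeft <;> cases h2 : e.2.isLeft <;> simp [h1, h2]
    rw [e12, e21] at h
    rw [hc12, hc21, h]
    exact hfew
  have hc22pos : 0 < c22 := by omega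
  have hc11pos : 0 < c11 := by omega
  -- extract an original edge and a zero edge
  obtain ⟨e1, he1⟩ := Finset.card_pos.mp hc11pos
  rw [Finset.mem_filter] at he1
  obtain ⟨he1M, h1a, h1b⟩ := he1
  obtain ⟨i, hi⟩ := Sum.isLeft_iff.mp h1a
  obtain ⟨j, hj⟩ := Sum.isLeft_iff.mp h1b
  obtain ⟨e2, he2⟩ := Finset.card_pos.mp hc22pos
  rw [Finset.mem_filter] at he2
  obtain ⟨he2M, h2a, h2b⟩ := he2
  obtain ⟨a, ha⟩ : ∃ a, e2.1 = Sum.inr a := by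
    rcases hx : e2.1 with v | v
    · rw [hx] at h2a; simp at h2a
    · exact ⟨v, rfl⟩
  obtain ⟨b, hb⟩ : ∃ b, e2.2 = Sum.inr b := by
    rcases hx : e2.2 with v | v
    · rw [hx] at h2b; simp at h2b
    · exact ⟨v, rfl⟩
  have hf1M : ((Sum.inl i, Sum.inl j) :
      (Fin n ⊕ Fin (m - k)) × (Fin m ⊕ Fin (n - k))) ∈ M := by
    have : e1 = (Sum.inl i, Sum.inl j) := Prod.ext hi hj
    rwa [this] at he1M
  have hf2M : ((Sum.inr a, Sum.inr b) :
      (Fin n ⊕ Fin (m - k)) × (Fin m ⊕ Fin (n - k))) ∈ M := by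
    have : e2 = (Sum.inr a, Sum.inr b) := Prod.ext ha hb
    rwa [this] at he2M
  set f1 : (Fin n ⊕ Fin (m - k)) × (Fin m ⊕ Fin (n - k)) := (Sum.inl i, Sum.inl j) with hf1
  set f2 : (Fin n ⊕ Fin (m - k)) × (Fin m ⊕ Fin (n - k)) := (Sum.inr a, Sum.inr b) with hf2
  set g1 : (Fin n ⊕ Fin (m - k)) × (Fin m ⊕ Fin (n - k)) := (Sum.inl i, Sum.inr b) with hg1
  set g2 : (Fin n ⊕ Fin (m - k)) × (Fin m ⊕ Fin (n - k)) := (Sum.inr a, Sum.inl j) with hg2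
  have hne12 : f1 ≠ f2 := by simp [hf1, hf2, Prod.ext_iff]
  have hg1M : g1 ∉ M := fun hg =>
    (hMmatch g1 hg f1 hf1M (by simp [hg1, hf1, Prod.ext_iff])).1 rfl
  have hg2M : g2 ∉ M := fun hg =>
    (hMmatch g2 hg f2 hf2M (by simp [hg2, hf2, Prod.ext_iff])).1 rfl
  set T := (M.erase f1).erase f2 with hT
  have hf2T : f2 ∈ M.erase f1 := Finset.mem_erase.mpr ⟨hne12.symm, hf2M⟩
  have hTmem : ∀ x ∈ T, x ∈ M ∧ x ≠ f1 ∧ x ≠ f2 := by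
    intro x hx
    rw [hT, Finset.mem_erase, Finset.mem_erase] at hx
    exact ⟨hx.2.2, hx.2.1, hx.1⟩
  have hg1T : g1 ∉ T := fun h => hg1M (hTmem g1 h).1
  have hg2T : g2 ∉ T := fun h => hg2M (hTmem g2 h).1
  have hg12 : g1 ≠ g2 := by simp [hg1, hg2, Prod.ext_iff]
  have hg1ins : g1 ∉ insert g2 T := by
    simp only [Finset.mem_insert]
    push_neg
    exact ⟨hg12, hg1T⟩
  refine ⟨insert g1 (insert g2 T), ?_, ?_, ?_⟩
  · -- matching
    intro e he f hf hef
    simp only [Finset.mem_insert] at he hf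
    have key1 : ∀ x ∈ T, Sum.inl i ≠ x.1 ∧ Sum.inr b ≠ x.2 := by
      intro x hx
      obtain ⟨hxM, hx1, hx2⟩ := hTmem x hx
      exact ⟨((hMmatch x hxM f1 hf1M hx1).1).symm, ((hMmatch x hxM f2 hf2M hx2).2).symm⟩
    have key2 : ∀ x ∈ T, Sum.inr a ≠ x.1 ∧ Sum.inl j ≠ x.2 := by
      intro x hx
      obtain ⟨hxM, hx1, hx2⟩ := hTmem x hx
      exact ⟨((hMmatch x hxM f2 hf2M hx2).1).symm, ((hMmatch x hxM f1 hf1M hx1).2).symm⟩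
    rcases he with rfl | rfl | heT
    · rcases hf with rfl | rfl | hfT
      · exact absurd rfl hef
      · exact ⟨by simp [hg1, hg2], by simp [hg1, hg2]⟩
      · exact key1 f hfT
    · rcases hf with rfl | rfl | hfT
      · exact ⟨by simp [hg1, hg2], by simp [hg1, hg2]⟩
      · exact absurd rfl hef
      · exact key2 f hfT
    · rcases hf with rfl | rfl | hfT
      · exact ⟨((key1 e heT).1).symm, ((key1 e heT).2).symm⟩
      · exact ⟨((key2 e heT).1).symm, ((key2 e heT).2).symm⟩
      · exact hMmatch e (hTmem e heT).1 f (hTmem f hfT).1 hef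
  · -- cardinality
    have hTc : T.card = M.card - 1 - 1 := by
      rw [hT, Finset.card_erase_of_mem hf2T, Finset.card_erase_of_mem hf1M]
    have hpos : 0 < M.card - 1 := by
      have := Finset.card_pos.mpr ⟨f2, hf2T⟩
      rw [Finset.card_erase_of_mem hf1M] at this
      exact this
    rw [Finset.card_insert_of_notMem hg1ins, Finset.card_insert_of_notMem hg2T]
    omega
  · -- weight
    have hs1 : (∑ e ∈ M.erase f1, w' e.1 e.2) + w' f1.1 f1.2 = ∑ e ∈ M, w' e.1 e.2 :=
      Finset.sum_erase_add M _ hf1M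
    have hs2 : (∑ e ∈ T, w' e.1 e.2) + w' f2.1 f2.2 = ∑ e ∈ M.erase f1, w' e.1 e.2 :=
      Finset.sum_erase_add _ _ hf2T
    have hv1 : w' f1.1 f1.2 = w i j := by simp [hw', hf1, extWeight]
    have hv2 : w' f2.1 f2.2 = 0 := by simp [hw', hf2, extWeight]
    have hv3 : w' g1.1 g1.2 = A := by simp [hw', hg1, extWeight]
    have hv4 : w' g2.1 g2.2 = A := by simp [hw', hg2, extWeight]
    have hM'sum : matchWeight w' (insert g1 (insert g2 T))
        = w' g1.1 g1.2 + (w' g2.1 g2.2 + ∑ e ∈ T, w' e.1 e.2) := by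
      rw [matchWeight, Finset.sum_insert hg1ins, Finset.sum_insert hg2T]
    have hwij : w i j ≤ ∑ i', ∑ j', w i' j' := by
      have h1 : w i j ≤ ∑ j', w i j' :=
        Finset.single_le_sum (fun j' _ => hw i j') (Finset.mem_univ j)
      have h2 : (∑ j', w i j') ≤ ∑ i', ∑ j', w i' j' :=
        Finset.single_le_sum
          (fun i' _ => Finset.sum_nonneg fun j' _ => hw i' j') (Finset.mem_univ i)
      linarith
    have hA0 : 0 < A :=
      lt_of_le_of_lt (Finset.sum_nonneg fun i' _ => Finset.sum_nonneg fun j' _ => hw i' j') hA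
    have hMsum : matchWeight w' M = w i j + (0 + ∑ e ∈ T, w' e.1 e.2) := by
      rw [matchWeight, ← hs1, ← hs2, hv1, hv2]; ring
    rw [hMsum, hM'sum, hv3, hv4]
    linarith
end

section
/- In the many-to-one stable matching setting where each acceptor has a quota q and strict preferences, proposer-optimal deferred acceptance yields a stable matching in which every proposer is matched to the best acceptor achievable in any stable matching: if any stable matching matches proposer p to acceptor a, then p weakly prefers its deferred-acceptance partner to a. -/
/-- State of the many-to-one deferred acceptance procedure: `pending p` is the list of
acceptors proposer `p` has not yet proposed to (in decreasing order of preference),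
and `matched a` is the set of proposers tentatively held by acceptor `a`. -/
structure DAState (np na : ℕ) where
  pending : Fin np → List (Fin na)
  matched : Fin na → Finset (Fin np)

/-- A proposer is free if no acceptor currently holds it. -/
def isFreeP {np na : ℕ} (s : DAState np na) (p : Fin np) : Bool :=
  (List.finRange na).all fun a => decide (p ∉ s.matched a)

/-- The next proposer to propose: a free proposer with a nonempty remaining list. -/
def nextProposer {np na : ℕ} (s : DAState np na) : Option (Fin np) :=
  (List.finRange np).find? fun p => !(s.pending p).isEmpty && isFreeP s p

/-- One step of many-to-one deferred acceptance with quotas `q`: a free proposer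
proposes to the next acceptor `a` on its list; `a` keeps the `q a` best proposers it
has seen (with respect to its ranking `prefA a`, lower is better) and rejects the rest. -/
noncomputable def daStep {np na : ℕ} (q : Fin na → ℕ) (prefA : Fin na → Fin np → ℕ)
    (s : DAState np na) : DAState np na :=
  match nextProposer s with
  | none => s
  | some p =>
    match s.pending p with
    | [] => s
    | a :: rest =>
      let pending' := Function.update s.pending p rest
      let S := insert p (s.matched a)
      if S.card ≤ q a then
        ⟨pending', Function.update s.matched a S⟩
      else
        match S.toList.argmax (prefA a) with
        | none => ⟨pending', s.matched⟩
        | some worst => ⟨pending', Function.update s.matched a (S.erase worst)⟩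

/-- The many-to-one matching produced by proposer-optimal deferred acceptance. -/
noncomputable def galeShapley {np na : ℕ} (prefP : Fin np → List (Fin na))
    (q : Fin na → ℕ) (prefA : Fin na → Fin np → ℕ) : Fin na → Finset (Fin np) :=
  ((daStep q prefA)^[∑ p, (prefP p).length] ⟨prefP, fun _ => ∅⟩).matched

/-- `ν` is a many-to-one matching: quotas respected, each proposer matched to at most
one acceptor, and only to acceptable acceptors. -/
def IsMatchingQ {np na : ℕ} (prefP : Fin np → List (Fin na)) (q : Fin na → ℕ)
    (ν : Fin na → Finset (Fin np)) : Prop :=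
  (∀ a, (ν a).card ≤ q a) ∧
  (∀ p a a', p ∈ ν a → p ∈ ν a' → a = a') ∧
  (∀ a p, p ∈ ν a → a ∈ prefP p)

/-- Stability: no blocking pair `(p, a)` where `a` is acceptable to `p`, not matched to
`p`, `p` prefers `a` to its current match (or is unmatched), and `a` has a free slot or
prefers `p` to one of its current matches. -/
def IsStable {np na : ℕ} (prefP : Fin np → List (Fin na)) (q : Fin na → ℕ)
    (prefA : Fin na → Fin np → ℕ) (ν : Fin na → Finset (Fin np)) : Prop :=
  IsMatchingQ prefP q ν ∧
  ¬ ∃ (p : Fin np) (a : Fin na),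
      a ∈ prefP p ∧ p ∉ ν a ∧
      (∀ a', p ∈ ν a' → (prefP p).idxOf a < (prefP p).idxOf a') ∧
      ((ν a).card < q a ∨ ∃ p' ∈ ν a, prefA a p < prefA a p')

/-!
Deferred acceptance is analysed through two invariants of its states. The first: each
proposer has proposed down an initial segment of its list, can be held only by the last
acceptor it proposed to, and an acceptor that has rejected `p` is full of proposers it ranks
above `p`. Once no free proposer has an acceptor left to propose to, this is stability.
The second: no proposer has been rejected by an acceptor it is matched to in some stable
matching `ν`. It survives a step because if `a` rejects its `ν`-partner `p''`, then `a` is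
full of proposers it prefers to `p''`, one of whom, `p'`, is not matched to `a` in `ν`; by
the invariant `p'` has not yet proposed to its `ν`-partner, so it prefers `a` to it, and
`(p', a)` blocks `ν`.
-/

theorem List.idxOf_lt_idxOf_of_cons_suffix {α : Type*} [DecidableEq α] {l t : List α}
    {a b : α} (hl : l.Nodup) (hs : a :: t <:+ l) (hb : b ∈ t) : l.idxOf a < l.idxOf b := by
  obtain ⟨pre, rfl⟩ := hs
  obtain ⟨-, hat, hdisj⟩ := List.nodup_append.1 hl
  have ha : a ∉ pre := fun h => hdisj a h a List.mem_cons_self rfl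
  have hb' : b ∉ pre := fun h => hdisj b h b (List.mem_cons_of_mem _ hb) rfl
  have hba : b ≠ a := by rintro rfl; exact (List.nodup_cons.1 hat).1 hb
  rw [List.idxOf_append_of_notMem ha, List.idxOf_append_of_notMem hb',
    List.idxOf_cons_self, List.idxOf_cons_ne t hba.symm]
  omega

theorem List.head_eq_of_cons_suffix {α : Type*} {l t t' : List α} {a a' : α}
    (h : a :: t <:+ l) (h' : a' :: t' <:+ l) (ht : t.length = t'.length) : a = a' := by
  have hle : (a :: t).length ≤ (a' :: t').length := by simp [ht]
  exact (List.cons.inj ((List.suffix_of_suffix_length_le h h' hle).eq_of_length (by simp [ht]))).1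

section DeferredAcceptance

variable {np na : ℕ} {prefP : Fin np → List (Fin na)} {q : Fin na → ℕ}
  {prefA : Fin na → Fin np → ℕ} {s s' : DAState np na} {p : Fin np} {a : Fin na}

theorem daStep_of_nextProposer_eq_none (h : nextProposer s = none) : daStep q prefA s = s := by
  unfold daStep; rw [h]

theorem daStep_pending (hnp : nextProposer s = some p) {rest : List (Fin na)}
    (hpend : s.pending p = a :: rest) :
    (daStep q prefA s).pending = Function.update s.pending p rest := by
  unfold daStep
  rw [hnp]; dsimp only; rw [hpend]; dsimp only
  split
  · rfl
  · split <;> rfl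

theorem daStep_matched_of_card_le (hnp : nextProposer s = some p) {rest : List (Fin na)}
    (hpend : s.pending p = a :: rest) (h : (insert p (s.matched a)).card ≤ q a) :
    (daStep q prefA s).matched = Function.update s.matched a (insert p (s.matched a)) := by
  unfold daStep
  rw [hnp]; dsimp only; rw [hpend]; dsimp only
  rw [if_pos h]

theorem daStep_matched_of_lt_card (hnp : nextProposer s = some p) {rest : List (Fin na)}
    (hpend : s.pending p = a :: rest) (h : q a < (insert p (s.matched a)).card) :
    ∃ worst, worst ∈ (insert p (s.matched a)).toList.argmax (prefA a) ∧
      (daStep q prefA s).matched =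
        Function.update s.matched a ((insert p (s.matched a)).erase worst) := by
  obtain ⟨worst, hworst⟩ :
      ∃ worst, (insert p (s.matched a)).toList.argmax (prefA a) = some worst :=
    Option.ne_none_iff_exists'.1 fun hnone => by simpa using List.argmax_eq_none.1 hnone
  refine ⟨worst, hworst, ?_⟩
  unfold daStep
  rw [hnp]; dsimp only; rw [hpend]; dsimp only
  rw [if_neg h.not_ge, hworst]

theorem nextProposer_spec (h : nextProposer s = some p) :
    s.pending p ≠ [] ∧ ∀ b, p ∉ s.matched b := by
  have hfind := List.find?_some h
  simp only [Bool.and_eq_true, Bool.not_eq_true', isFreeP,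
    List.all_eq_true, decide_eq_true_eq] at hfind
  exact ⟨by simpa using hfind.1, fun b => hfind.2 b (List.mem_finRange b)⟩

theorem exists_mem_matched_of_nextProposer_eq_none (h : nextProposer s = none)
    (hne : s.pending p ≠ []) : ∃ b, p ∈ s.matched b := by
  have hfind := List.find?_eq_none.1 h p (List.mem_finRange p)
  simp only [Bool.and_eq_true, Bool.not_eq_true', isFreeP,
    List.all_eq_true, decide_eq_true_eq, not_and, not_forall] at hfind
  obtain ⟨b, -, hb⟩ := hfind (List.isEmpty_eq_false_iff.2 hne)
  exact ⟨b, not_not.1 hb⟩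

structure DAInvariant (prefP : Fin np → List (Fin na)) (q : Fin na → ℕ)
    (prefA : Fin na → Fin np → ℕ) (s : DAState np na) : Prop where
  pending_suffix : ∀ p, s.pending p <:+ prefP p
  cons_pending_suffix : ∀ a p, p ∈ s.matched a → a :: s.pending p <:+ prefP p
  card_le : ∀ a, (s.matched a).card ≤ q a
  full_of_rejected : ∀ p a, a ∈ prefP p → a ∉ s.pending p → p ∉ s.matched a →
    (s.matched a).card = q a ∧ ∀ p' ∈ s.matched a, prefA a p' < prefA a p

theorem DAInvariant.eq_of_mem_matched (hI : DAInvariant prefP q prefA s) {b b' : Fin na}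
    (hb : p ∈ s.matched b) (hb' : p ∈ s.matched b') : b = b' :=
  List.head_eq_of_cons_suffix (hI.cons_pending_suffix b p hb) (hI.cons_pending_suffix b' p hb') rfl

theorem DAInvariant.mem_prefP (hI : DAInvariant prefP q prefA s) (h : p ∈ s.matched a) :
    a ∈ prefP p :=
  (hI.cons_pending_suffix a p h).mem List.mem_cons_self

def HoldsStablePartners (prefP : Fin np → List (Fin na)) (q : Fin na → ℕ)
    (prefA : Fin na → Fin np → ℕ) (s : DAState np na) : Prop :=
  ∀ ν : Fin na → Finset (Fin np), IsStable prefP q prefA ν →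
    ∀ p a, p ∈ ν a → a ∉ s.pending p → p ∈ s.matched a

/-- The effect of one proposal of `p` to `a`, common to both branches of `daStep`. -/
structure IsProposal (prefP : Fin np → List (Fin na)) (q : Fin na → ℕ)
    (prefA : Fin na → Fin np → ℕ) (s s' : DAState np na) (p : Fin np) (a : Fin na) :
    Prop where
  free : ∀ b, p ∉ s.matched b
  pending_self : s.pending p = a :: s'.pending p
  pending_of_ne : ∀ p', p' ≠ p → s'.pending p' = s.pending p'
  matched_of_ne : ∀ b, b ≠ a → s'.matched b = s.matched b
  matched_subset : s'.matched a ⊆ insert p (s.matched a)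
  card_le : (s'.matched a).card ≤ q a
  full_of_rejected : ∀ p'', a ∈ prefP p'' → a ∉ s'.pending p'' → p'' ∉ s'.matched a →
    (s'.matched a).card = q a ∧ ∀ p' ∈ s'.matched a, prefA a p' < prefA a p''

theorem IsProposal.mem_pending (h : IsProposal prefP q prefA s s' p a) {p' : Fin np}
    {b : Fin na} (hb : b ∈ s.pending p') (hba : b ≠ a) : b ∈ s'.pending p' := by
  by_cases hp' : p' = p
  · subst hp'
    rw [h.pending_self] at hb
    exact (List.mem_cons.1 hb).resolve_left hba
  · rwa [h.pending_of_ne p' hp']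

theorem IsProposal.of_update (hfree : ∀ b, p ∉ s.matched b) {rest : List (Fin na)}
    (hpend : s.pending p = a :: rest) {X : Finset (Fin np)}
    (hps : s'.pending = Function.update s.pending p rest)
    (hms : s'.matched = Function.update s.matched a X)
    (hXsub : X ⊆ insert p (s.matched a)) (hXcard : X.card ≤ q a)
    (hXrej : ∀ p'', a ∈ prefP p'' → p'' ∉ X → (p'' = p ∨ a ∉ s.pending p'') →
      X.card = q a ∧ ∀ p' ∈ X, prefA a p' < prefA a p'') :
    IsProposal prefP q prefA s s' p a := by
  have hpend_ne : ∀ p', p' ≠ p → s'.pending p' = s.pending p' := fun p' h => by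
    rw [hps, Function.update_of_ne h]
  have hma : s'.matched a = X := by rw [hms, Function.update_self]
  refine ⟨hfree, by rw [hps, Function.update_self, hpend], hpend_ne,
    fun b h => by rw [hms, Function.update_of_ne h], hma ▸ hXsub, hma ▸ hXcard, ?_⟩
  intro p'' hp'' hpend'' hnX
  rw [hma] at hnX ⊢
  refine hXrej p'' hp'' hnX ?_
  by_cases hp : p'' = p
  · exact Or.inl hp
  · exact Or.inr (hpend_ne p'' hp ▸ hpend'')

theorem isProposal_daStep (hA : ∀ a, Function.Injective (prefA a))
    (hI : DAInvariant prefP q prefA s) (hnp : nextProposer s = some p) {rest : List (Fin na)}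
    (hpend : s.pending p = a :: rest) : IsProposal prefP q prefA s (daStep q prefA s) p a := by
  have hfree := (nextProposer_spec hnp).2
  have hps := daStep_pending (q := q) (prefA := prefA) hnp hpend
  have hcard : (insert p (s.matched a)).card = (s.matched a).card + 1 :=
    Finset.card_insert_of_notMem (hfree a)
  by_cases hle : (insert p (s.matched a)).card ≤ q a
  · refine .of_update hfree hpend hps (daStep_matched_of_card_le hnp hpend hle)
      subset_rfl hle fun p'' hp'' hnX hproposed => ?_
    have hp''p : p'' ≠ p := fun h => hnX (h ▸ Finset.mem_insert_self _ _)
    have hfull := (hI.full_of_rejected p'' a hp'' (hproposed.resolve_left hp''p)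
      fun h => hnX (Finset.mem_insert_of_mem h)).1
    omega
  · obtain ⟨worst, hworst, hms⟩ := daStep_matched_of_lt_card (q := q) hnp hpend (not_le.1 hle)
    have hwS : worst ∈ insert p (s.matched a) :=
      Finset.mem_toList.1 (List.argmax_mem hworst)
    have hbetter : ∀ x ∈ (insert p (s.matched a)).erase worst, prefA a x < prefA a worst :=
      fun x hx => lt_of_le_of_ne
        (List.le_of_mem_argmax (Finset.mem_toList.2 (Finset.mem_of_mem_erase hx)) hworst)
        fun h => Finset.ne_of_mem_erase hx (hA a h)
    have hXcard : ((insert p (s.matched a)).erase worst).card = q a := by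
      have := hI.card_le a
      rw [Finset.card_erase_of_mem hwS]
      omega
    refine .of_update hfree hpend hps hms (Finset.erase_subset _ _) hXcard.le
      fun p'' hp'' hnX hproposed => ⟨hXcard, fun p' hp' => ?_⟩
    by_cases hp''w : p'' = worst
    · exact hp''w ▸ hbetter p' hp'
    -- `p''` was rejected by `a` at an earlier step.
    have hp''S : p'' ∉ insert p (s.matched a) := fun h => hnX (Finset.mem_erase.2 ⟨hp''w, h⟩)
    obtain ⟨-, hold⟩ := hI.full_of_rejected p'' a hp''
      (hproposed.resolve_left fun h => hp''S (h ▸ Finset.mem_insert_self _ _))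
      fun h => hp''S (Finset.mem_insert_of_mem h)
    rcases Finset.mem_insert.1 (Finset.mem_of_mem_erase hp') with rfl | hp'old
    · have hwold : worst ∈ s.matched a :=
        (Finset.mem_insert.1 hwS).resolve_left fun h => Finset.ne_of_mem_erase hp' h.symm
      exact (hbetter _ hp').trans (hold worst hwold)
    · exact hold p' hp'old

theorem DAInvariant.of_isProposal (hI : DAInvariant prefP q prefA s)
    (h : IsProposal prefP q prefA s s' p a) : DAInvariant prefP q prefA s' where
  pending_suffix p' := by
    by_cases hp' : p' = p
    · subst hp'
      exact (List.suffix_cons _ _).trans (h.pending_self ▸ hI.pending_suffix p')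
    · exact h.pending_of_ne p' hp' ▸ hI.pending_suffix p'
  cons_pending_suffix b p' hp' := by
    have hold : p' = p ∨ p' ∈ s.matched b := by
      by_cases hb : b = a
      · subst hb; exact Finset.mem_insert.1 (h.matched_subset hp')
      · exact Or.inr (h.matched_of_ne b hb ▸ hp')
    rcases hold with rfl | hold
    · have hb : b = a := by
        by_contra hb
        exact h.free b (h.matched_of_ne b hb ▸ hp')
      exact hb ▸ h.pending_self ▸ hI.pending_suffix p'
    · have hp'p : p' ≠ p := fun e => h.free b (e ▸ hold)
      exact h.pending_of_ne p' hp'p ▸ hI.cons_pending_suffix b p' hold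
  card_le b := by
    by_cases hb : b = a
    · exact hb ▸ h.card_le
    · exact h.matched_of_ne b hb ▸ hI.card_le b
  full_of_rejected p' b hb hbpend hbm := by
    by_cases hba : b = a
    · subst hba; exact h.full_of_rejected p' hb hbpend hbm
    · rw [h.matched_of_ne b hba] at hbm ⊢
      exact hI.full_of_rejected p' b hb (fun hm => hbpend (h.mem_pending hm hba)) hbm

theorem IsProposal.idxOf_lt_of_isStable (hP : ∀ p, (prefP p).Nodup)
    (hI : DAInvariant prefP q prefA s) (hJ : HoldsStablePartners prefP q prefA s)
    (h : IsProposal prefP q prefA s s' p a) {ν : Fin na → Finset (Fin np)}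
    (hν : IsStable prefP q prefA ν) {p' : Fin np} (hp' : p' ∈ s'.matched a) {b : Fin na}
    (hb : p' ∈ ν b) (hba : b ≠ a) : (prefP p').idxOf a < (prefP p').idxOf b := by
  have hnotheld : p' ∉ s.matched b := fun hheld => by
    have hp'p : p' ≠ p := fun e => h.free b (e ▸ hheld)
    have hp'a := (Finset.mem_insert.1 (h.matched_subset hp')).resolve_left hp'p
    exact hba (hI.eq_of_mem_matched hheld hp'a)
  have hpending : b ∈ s.pending p' := by
    by_contra hb'
    exact hnotheld (hJ ν hν p' b hb hb')
  exact List.idxOf_lt_idxOf_of_cons_suffix (hP p')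
    ((hI.of_isProposal h).cons_pending_suffix a p' hp') (h.mem_pending hpending hba)

theorem HoldsStablePartners.of_isProposal (hP : ∀ p, (prefP p).Nodup)
    (hI : DAInvariant prefP q prefA s) (hJ : HoldsStablePartners prefP q prefA s)
    (h : IsProposal prefP q prefA s s' p a) : HoldsStablePartners prefP q prefA s' := by
  intro ν hν p'' b hb hbpend
  by_cases hba : b = a
  swap
  · rw [h.matched_of_ne b hba]
    exact hJ ν hν p'' b hb fun hm => hbpend (h.mem_pending hm hba)
  subst hba
  by_contra hnX
  obtain ⟨hfull, hprefers⟩ := h.full_of_rejected p'' (hν.1.2.2 b p'' hb) hbpend hnX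
  obtain ⟨p', hp', hp'ν⟩ : ∃ p' ∈ s'.matched b, p' ∉ ν b := by
    by_contra! hsub
    exact hnX (Finset.eq_of_subset_of_card_le hsub (hfull ▸ hν.1.1 b) ▸ hb)
  exact hν.2 ⟨p', b, (hI.of_isProposal h).mem_prefP hp', hp'ν,
    fun b' hb' => h.idxOf_lt_of_isStable hP hI hJ hν hp' hb' fun e => hp'ν (e ▸ hb'),
    Or.inr ⟨p'', hb, hprefers p' hp'⟩⟩

theorem invariants_daStep (hP : ∀ p, (prefP p).Nodup) (hA : ∀ a, Function.Injective (prefA a))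
    (hI : DAInvariant prefP q prefA s) (hJ : HoldsStablePartners prefP q prefA s) :
    DAInvariant prefP q prefA (daStep q prefA s) ∧
      HoldsStablePartners prefP q prefA (daStep q prefA s) := by
  cases hnp : nextProposer s with
  | none => rw [daStep_of_nextProposer_eq_none hnp]; exact ⟨hI, hJ⟩
  | some p =>
    obtain ⟨a, rest, hpend⟩ := List.exists_cons_of_ne_nil (nextProposer_spec hnp).1
    have h := isProposal_daStep hA hI hnp hpend
    exact ⟨hI.of_isProposal h, hJ.of_isProposal hP hI h⟩

theorem invariants_iterate_daStep (hP : ∀ p, (prefP p).Nodup)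
    (hA : ∀ a, Function.Injective (prefA a)) (n : ℕ) :
    DAInvariant prefP q prefA ((daStep q prefA)^[n] ⟨prefP, fun _ => ∅⟩) ∧
      HoldsStablePartners prefP q prefA ((daStep q prefA)^[n] ⟨prefP, fun _ => ∅⟩) := by
  induction n with
  | zero =>
    refine ⟨⟨fun p => List.suffix_refl _, fun _ _ h => absurd h (Finset.notMem_empty _),
      fun _ => by simp, fun _ _ hmem hpend _ => absurd hmem hpend⟩,
      fun ν hν p a hp hpend => absurd (hν.1.2.2 a p hp) hpend⟩
  | succ n ih =>
    rw [Function.iterate_succ_apply']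
    exact invariants_daStep hP hA ih.1 ih.2

theorem sum_length_pending_daStep (hnp : nextProposer s = some p) :
    ∑ p', ((daStep q prefA s).pending p').length + 1 = ∑ p', (s.pending p').length := by
  obtain ⟨a, rest, hpend⟩ := List.exists_cons_of_ne_nil (nextProposer_spec hnp).1
  rw [daStep_pending hnp hpend, ← Finset.add_sum_erase _ _ (Finset.mem_univ p),
    ← Finset.add_sum_erase _ _ (Finset.mem_univ p), Function.update_self, hpend,
    Finset.sum_congr rfl fun p' hp' => by rw [Function.update_of_ne (Finset.ne_of_mem_erase hp')]]
  simp only [List.length_cons]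
  omega

theorem nextProposer_iterate_daStep_eq_none (n : ℕ) (s : DAState np na)
    (hn : ∑ p, (s.pending p).length ≤ n) : nextProposer ((daStep q prefA)^[n] s) = none := by
  induction n generalizing s with
  | zero =>
    refine List.find?_eq_none.2 fun p _ => ?_
    have : s.pending p = [] := List.length_eq_zero_iff.1
      (Finset.sum_eq_zero_iff.1 (Nat.le_zero.1 hn) p (Finset.mem_univ p))
    simp [this]
  | succ n ih =>
    rw [Function.iterate_succ_apply]
    cases hnp : nextProposer s with
    | none => rwa [daStep_of_nextProposer_eq_none hnp,
        Function.iterate_fixed (daStep_of_nextProposer_eq_none hnp)]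
    | some p =>
      have := sum_length_pending_daStep (q := q) (prefA := prefA) hnp
      exact ih _ (by omega)

theorem DAInvariant.exists_mem_matched_idxOf_lt (hP : ∀ p, (prefP p).Nodup)
    (hI : DAInvariant prefP q prefA s) (hterm : nextProposer s = none)
    (ha : a ∈ s.pending p) :
    ∃ a', p ∈ s.matched a' ∧ (prefP p).idxOf a' < (prefP p).idxOf a := by
  obtain ⟨a', ha'⟩ := exists_mem_matched_of_nextProposer_eq_none hterm (List.ne_nil_of_mem ha)
  exact ⟨a', ha',
    List.idxOf_lt_idxOf_of_cons_suffix (hP p) (hI.cons_pending_suffix a' p ha') ha⟩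

theorem DAInvariant.isStable (hP : ∀ p, (prefP p).Nodup) (hI : DAInvariant prefP q prefA s)
    (hterm : nextProposer s = none) : IsStable prefP q prefA s.matched := by
  refine ⟨⟨hI.card_le, fun _ _ _ => hI.eq_of_mem_matched, fun _ _ => hI.mem_prefP⟩, ?_⟩
  rintro ⟨p, a, hap, hnm, hprefers, hblock⟩
  have hproposed : a ∉ s.pending p := fun ha => by
    obtain ⟨a', ha', hlt⟩ := hI.exists_mem_matched_idxOf_lt hP hterm ha
    exact (hprefers a' ha').not_gt hlt
  obtain ⟨hfull, hbetter⟩ := hI.full_of_rejected p a hap hproposed hnm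
  rcases hblock with hfree | ⟨p', hp', hlt⟩
  · exact hfree.ne hfull
  · exact (hbetter p' hp').not_gt hlt

theorem HoldsStablePartners.exists_mem_matched_idxOf_le (hP : ∀ p, (prefP p).Nodup)
    (hI : DAInvariant prefP q prefA s) (hJ : HoldsStablePartners prefP q prefA s)
    (hterm : nextProposer s = none) {ν : Fin na → Finset (Fin np)}
    (hν : IsStable prefP q prefA ν) (hp : p ∈ ν a) :
    ∃ a', p ∈ s.matched a' ∧ (prefP p).idxOf a' ≤ (prefP p).idxOf a := by
  by_cases ha : a ∈ s.pending p
  · obtain ⟨a', ha', hlt⟩ := hI.exists_mem_matched_idxOf_lt hP hterm ha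
    exact ⟨a', ha', hlt.le⟩
  · exact ⟨a, hJ ν hν p a hp ha, le_rfl⟩

end DeferredAcceptance

theorem galeShapley_stable_and_proposer_optimal_general (np na : ℕ)
    (prefP : Fin np → List (Fin na)) (q : Fin na → ℕ) (prefA : Fin na → Fin np → ℕ)
    (hP : ∀ p, (prefP p).Nodup) (hA : ∀ a, Function.Injective (prefA a)) :
    IsStable prefP q prefA (galeShapley prefP q prefA) ∧
    (∀ ν : Fin na → Finset (Fin np), IsStable prefP q prefA ν →
      ∀ (p : Fin np) (a : Fin na), p ∈ ν a →
        ∃ a' : Fin na, p ∈ galeShapley prefP q prefA a' ∧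
          (prefP p).idxOf a' ≤ (prefP p).idxOf a) := by
  obtain ⟨hI, hJ⟩ := invariants_iterate_daStep (q := q) hP hA (∑ p, (prefP p).length)
  have hterm := nextProposer_iterate_daStep_eq_none (q := q) (prefA := prefA)
    (∑ p, (prefP p).length) ⟨prefP, fun _ => ∅⟩ le_rfl
  exact ⟨hI.isStable hP hterm,
    fun ν hν p a hp => hJ.exists_mem_matched_idxOf_le hP hI hterm hν hp⟩

/-- with quotas and strict preferences, proposer-optimal deferred
acceptance yields a stable matching in which every proposer gets the best acceptor
achievable in any stable matching: if some stable matching `ν` matches `p` to `a`,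
then `p` is matched by deferred acceptance to an acceptor it weakly prefers to `a`. -/
theorem galeShapley_stable_and_proposer_optimal (np na : ℕ)
    (prefP : Fin np → List (Fin na)) (q : Fin na → ℕ) (prefA : Fin na → Fin np → ℕ)
    (hP : ∀ p, (prefP p).Nodup) (hA : ∀ a, Function.Injective (prefA a))
    (hq : ∀ a, 0 < q a) :
    IsStable prefP q prefA (galeShapley prefP q prefA) ∧
    (∀ ν : Fin na → Finset (Fin np), IsStable prefP q prefA ν →
      ∀ (p : Fin np) (a : Fin na), p ∈ ν a →
        ∃ a' : Fin na, p ∈ galeShapley prefP q prefA a' ∧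
          (prefP p).idxOf a' ≤ (prefP p).idxOf a) :=
  galeShapley_stable_and_proposer_optimal_general np na prefP q prefA hP hA
end

section
/- During the run of proposer-proposing deferred acceptance, if a proposer p is rejected by an acceptor a at some step, then a is impossible for p, i.e., no stable matching pairs p with a. (Proved by induction on the rejection steps.) -/
/-- The state of the deferred acceptance run after `t` steps. -/
noncomputable def daIter {np na : ℕ} (prefP : Fin np → List (Fin na))
    (q : Fin na → ℕ) (prefA : Fin na → Fin np → ℕ) (t : ℕ) : DAState np na :=
  (daStep q prefA)^[t] ⟨prefP, fun _ => ∅⟩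

/-- `p` proposes to `a` in state `s`. -/
def proposesTo {np na : ℕ} (s : DAState np na) (p : Fin np) (a : Fin na) : Prop :=
  nextProposer s = some p ∧ (s.pending p).head? = some a

/-- `p` is rejected by `a` at step `t` of the run: either its proposal to `a` is not
held at the next state, or it was held by `a` and is discarded at this step. -/
noncomputable def RejectedAt {np na : ℕ} (prefP : Fin np → List (Fin na))
    (q : Fin na → ℕ) (prefA : Fin na → Fin np → ℕ)
    (t : ℕ) (p : Fin np) (a : Fin na) : Prop :=
  (proposesTo (daIter prefP q prefA t) p a ∧
    p ∉ (daIter prefP q prefA (t + 1)).matched a) ∨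
  (p ∈ (daIter prefP q prefA t).matched a ∧
    p ∉ (daIter prefP q prefA (t + 1)).matched a)

/-!
At the step where `a` rejects `p`, `a` keeps `q a` proposers `p'`, all of which it prefers to
`p`. If a stable matching `ν` paired `p` with `a`, one of these `p'` would lie outside `ν a`.
Since proposers go down their lists in order, every acceptor that `p'` ranks above `a` has
rejected `p'` at an earlier step, so by induction none of them is `p'`'s partner in `ν`.
Hence `p'` prefers `a` to its partner in `ν`, and `(p', a)` blocks `ν`.
-/

theorem List.not_mem_of_idxOf_lt_of_suffix {α : Type*} [DecidableEq α] {l t : List α}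
    (hnd : l.Nodup) (hsuf : t <:+ l) {a b : α} (ha : a ∈ l) (hat : a ∉ t)
    (hlt : l.idxOf b < l.idxOf a) : b ∉ t := by
  obtain ⟨pre, rfl⟩ := hsuf
  intro hbt
  have hapre : a ∈ pre := (List.mem_append.1 ha).resolve_right hat
  have hbpre : b ∉ pre := fun hb => (List.nodup_append.1 hnd).2.2 b hb b hbt rfl
  rw [List.idxOf_append_of_notMem hbpre, List.idxOf_append_of_mem hapre] at hlt
  have := List.idxOf_lt_length_iff.2 hapre
  omega

section DeferredAcceptance

variable {np na : ℕ} {prefP : Fin np → List (Fin na)} {q : Fin na → ℕ}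
  {prefA : Fin na → Fin np → ℕ}

open Function

theorem not_mem_matched_of_nextProposer_eq_some {s : DAState np na} {p : Fin np}
    (h : nextProposer s = some p) (a : Fin na) : p ∉ s.matched a := by
  have h2 := List.find?_some h
  simp only [Bool.and_eq_true, isFreeP, List.all_eq_true, decide_eq_true_eq] at h2
  exact h2.2 a (List.mem_finRange a)

theorem daStep_cases (q : Fin na → ℕ) (prefA : Fin na → Fin np → ℕ) (s : DAState np na) :
    (daStep q prefA s = s ∧ ∀ p, nextProposer s = some p → s.pending p = []) ∨
    ∃ p a rest T, nextProposer s = some p ∧ s.pending p = a :: rest ∧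
      daStep q prefA s = ⟨update s.pending p rest, update s.matched a T⟩ ∧
      ((T = insert p (s.matched a) ∧ T.card ≤ q a) ∨
       (¬ (insert p (s.matched a)).card ≤ q a ∧
        ∃ worst, (insert p (s.matched a)).toList.argmax (prefA a) = some worst ∧
          T = (insert p (s.matched a)).erase worst)) := by
  cases hnp : nextProposer s with
  | none => exact Or.inl ⟨by simp [daStep, hnp], fun _ h => by cases h⟩
  | some p =>
    cases hpl : s.pending p with
    | nil => exact Or.inl ⟨by simp [daStep, hnp, hpl], fun _ h => by cases h; exact hpl⟩
    | cons a rest =>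
      by_cases hc : (insert p (s.matched a)).card ≤ q a
      · exact Or.inr ⟨p, a, rest, _, rfl, hpl, by simp [daStep, hnp, hpl, hc], Or.inl ⟨rfl, hc⟩⟩
      · cases hw : (insert p (s.matched a)).toList.argmax (prefA a) with
        | none => simp [List.argmax_eq_none] at hw
        | some worst =>
          exact Or.inr ⟨p, a, rest, _, rfl, hpl, by simp [daStep, hnp, hpl, hc, hw],
            Or.inr ⟨hc, worst, hw, rfl⟩⟩

theorem daIter_succ (t : ℕ) :
    daIter prefP q prefA (t + 1) = daStep q prefA (daIter prefP q prefA t) := by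
  simp [daIter, Function.iterate_succ_apply']

variable (prefP q) in
structure DAInvariant_s7 (s : DAState np na) : Prop where
  pending_suffix : ∀ p, s.pending p <:+ prefP p
  card_matched_le : ∀ a, (s.matched a).card ≤ q a
  eq_of_mem_matched : ∀ p a a', p ∈ s.matched a → p ∈ s.matched a' → a = a'
  mem_prefP : ∀ p a, p ∈ s.matched a → a ∈ prefP p
  not_mem_pending : ∀ p a, p ∈ s.matched a → a ∉ s.pending p

theorem DAInvariant_s7.propose (hP : ∀ p, (prefP p).Nodup) {s : DAState np na}
    (hinv : DAInvariant_s7 prefP q s) {p : Fin np} {a : Fin na} {rest : List (Fin na)}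
    (hpl : s.pending p = a :: rest) (hfree : ∀ a', p ∉ s.matched a')
    {T : Finset (Fin np)} (hT : T ⊆ insert p (s.matched a)) (hTc : T.card ≤ q a) :
    DAInvariant_s7 prefP q ⟨update s.pending p rest, update s.matched a T⟩ := by
  have hsuf : a :: rest <:+ prefP p := hpl ▸ hinv.pending_suffix p
  have hnd : (a :: rest).Nodup := (hP p).sublist hsuf.sublist
  have hmem : ∀ {p' a'}, p' ∈ update s.matched a T a' →
      (a' = a ∧ p' = p) ∨ (p' ≠ p ∧ p' ∈ s.matched a') := by
    intro p' a' h
    rcases eq_or_ne a' a with rfl | ha'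
    · rw [update_self] at h
      rcases Finset.mem_insert.1 (hT h) with rfl | h
      · exact Or.inl ⟨rfl, rfl⟩
      · exact Or.inr ⟨fun he => hfree a' (he ▸ h), h⟩
    · rw [update_of_ne ha'] at h
      exact Or.inr ⟨fun he => hfree a' (he ▸ h), h⟩
  refine ⟨fun p' => ?_, fun a' => ?_, fun p' a₁ a₂ h₁ h₂ => ?_, fun p' a' h => ?_,
    fun p' a' h => ?_⟩
  · rcases eq_or_ne p' p with rfl | hp'
    · simpa using (List.suffix_cons a rest).trans hsuf
    · simpa [update_of_ne hp'] using hinv.pending_suffix p'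
  · rcases eq_or_ne a' a with rfl | ha'
    · simpa using hTc
    · simpa [update_of_ne ha'] using hinv.card_matched_le a'
  · rcases hmem h₁ with ⟨rfl, rfl⟩ | ⟨hp₁, h₁⟩ <;> rcases hmem h₂ with ⟨rfl, h⟩ | ⟨hp₂, h₂⟩
    · rfl
    · exact absurd h₂ (hfree a₂)
    · exact absurd h hp₁
    · exact hinv.eq_of_mem_matched p' a₁ a₂ h₁ h₂
  · rcases hmem h with ⟨rfl, rfl⟩ | ⟨-, h⟩
    · exact hsuf.subset List.mem_cons_self
    · exact hinv.mem_prefP p' a' h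
  · rcases hmem h with ⟨rfl, rfl⟩ | ⟨hp', h⟩
    · simpa using (List.nodup_cons.1 hnd).1
    · simpa [update_of_ne hp'] using hinv.not_mem_pending p' a' h

theorem DAInvariant_s7.daStep (hP : ∀ p, (prefP p).Nodup) {s : DAState np na}
    (hinv : DAInvariant_s7 prefP q s) : DAInvariant_s7 prefP q (daStep q prefA s) := by
  rcases daStep_cases q prefA s with ⟨heq, -⟩ | ⟨p, a, rest, T, hnp, hpl, heq, hT⟩
  · rwa [heq]
  rw [heq]
  have hfree := not_mem_matched_of_nextProposer_eq_some hnp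
  rcases hT with ⟨rfl, hc⟩ | ⟨hc, worst, hw, rfl⟩
  · exact hinv.propose hP hpl hfree subset_rfl hc
  · have hS : (insert p (s.matched a)).card = (s.matched a).card + 1 :=
      Finset.card_insert_of_notMem (hfree a)
    have hwmem := Finset.mem_toList.1 (List.argmax_mem hw)
    refine hinv.propose hP hpl hfree (Finset.erase_subset _ _) ?_
    have := hinv.card_matched_le a
    rw [Finset.card_erase_of_mem hwmem]
    omega

theorem daInvariant_daIter (hP : ∀ p, (prefP p).Nodup) (t : ℕ) :
    DAInvariant_s7 prefP q (daIter prefP q prefA t) := by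
  induction t with
  | zero => constructor <;> simp [daIter]
  | succ t ih => rw [daIter_succ]; exact ih.daStep hP

variable (q prefA) in
def Rejects (s : DAState np na) (p : Fin np) (a : Fin na) : Prop :=
  (proposesTo s p a ∨ p ∈ s.matched a) ∧ p ∉ (daStep q prefA s).matched a

theorem rejectedAt_iff_rejects {t : ℕ} {p : Fin np} {a : Fin na} :
    RejectedAt prefP q prefA t p a ↔ Rejects q prefA (daIter prefP q prefA t) p a := by
  rw [RejectedAt, Rejects, daIter_succ]
  tauto

section Step

variable {s : DAState np na} {p p' : Fin np} {a a' : Fin na}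

theorem proposesTo_of_mem_pending_of_not_mem_daStep (h : a ∈ s.pending p)
    (h' : a ∉ (daStep q prefA s).pending p) : proposesTo s p a := by
  rcases daStep_cases q prefA s with ⟨heq, -⟩ | ⟨p₀, a₀, rest, T, hnp, hpl, heq, -⟩
  · exact absurd (by rwa [heq]) h'
  rw [heq] at h'
  rcases eq_or_ne p p₀ with rfl | hp
  · simp only [update_self] at h'
    rw [hpl] at h
    obtain rfl : a = a₀ := (List.mem_cons.1 h).resolve_right h'
    exact ⟨hnp, by simp [hpl]⟩
  · exact absurd h (by simpa [update_of_ne hp] using h')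

theorem rejects_of_not_mem_daStep (h : a ∈ s.pending p ∨ p ∈ s.matched a)
    (hpend : a ∉ (daStep q prefA s).pending p) (hmat : p ∉ (daStep q prefA s).matched a) :
    Rejects q prefA s p a :=
  ⟨h.imp_left (proposesTo_of_mem_pending_of_not_mem_daStep · hpend), hmat⟩

theorem Rejects.daStep_eq (hcard : ∀ a, (s.matched a).card ≤ q a)
    (h : Rejects q prefA s p a) :
    ∃ p₀ rest, nextProposer s = some p₀ ∧ s.pending p₀ = a :: rest ∧
      (insert p₀ (s.matched a)).card = q a + 1 ∧
      (insert p₀ (s.matched a)).toList.argmax (prefA a) = some p ∧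
      daStep q prefA s =
        ⟨update s.pending p₀ rest, update s.matched a ((insert p₀ (s.matched a)).erase p)⟩ := by
  obtain ⟨hprop, hnm⟩ := h
  rcases daStep_cases q prefA s with ⟨heq, hemp⟩ | ⟨p₀, a₀, rest, T, hnp, hpl, heq, hT⟩
  · rcases hprop with hprop | hheld
    · simpa [hemp p hprop.1] using hprop.2
    · exact absurd (by rwa [heq]) hnm
  have hfree := not_mem_matched_of_nextProposer_eq_some hnp
  rw [heq] at hnm
  obtain ⟨rfl, hpS⟩ : a₀ = a ∧ p ∈ insert p₀ (s.matched a₀) := by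
    rcases hprop with ⟨hnp', hhead⟩ | hheld
    · obtain rfl : p₀ = p := Option.some_inj.1 (hnp.symm.trans hnp')
      exact ⟨by simpa [hpl] using hhead, Finset.mem_insert_self _ _⟩
    · obtain rfl : a₀ = a := by
        by_contra ha
        exact hnm (by simpa [update_of_ne (Ne.symm ha)] using hheld)
      exact ⟨rfl, Finset.mem_insert_of_mem hheld⟩
  simp only [update_self] at hnm
  rcases hT with ⟨rfl, -⟩ | ⟨hc, worst, hw, rfl⟩
  · exact absurd hpS hnm
  obtain rfl : worst = p := by
    by_contra hne
    exact hnm (Finset.mem_erase.2 ⟨Ne.symm hne, hpS⟩)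
  have := Finset.card_insert_of_notMem (hfree a₀)
  have := hcard a₀
  exact ⟨p₀, rest, hnp, hpl, by omega, hw, heq⟩

theorem Rejects.card_matched_daStep (hcard : ∀ a, (s.matched a).card ≤ q a)
    (h : Rejects q prefA s p a) : ((daStep q prefA s).matched a).card = q a := by
  obtain ⟨p₀, rest, -, -, hc, hw, heq⟩ := h.daStep_eq hcard
  simp only [heq, update_self]
  rw [Finset.card_erase_of_mem (Finset.mem_toList.1 (List.argmax_mem hw)),
    hc, Nat.add_sub_cancel]

theorem Rejects.exists_mem_matched_daStep_not_mem (hcard : ∀ a, (s.matched a).card ≤ q a)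
    (h : Rejects q prefA s p a) {N : Finset (Fin np)} (hpN : p ∈ N) (hN : N.card ≤ q a) :
    ∃ p' ∈ (daStep q prefA s).matched a, p' ∉ N := by
  have hlt : (N.erase p).card < ((daStep q prefA s).matched a).card := by
    rw [Finset.card_erase_of_mem hpN, h.card_matched_daStep hcard]
    have := Finset.card_pos.2 ⟨p, hpN⟩
    omega
  obtain ⟨p', hp'M, hp'⟩ := Finset.exists_mem_notMem_of_card_lt_card hlt
  refine ⟨p', hp'M, fun hp'N => hp' (Finset.mem_erase.2 ⟨?_, hp'N⟩)⟩
  rintro rfl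
  exact h.2 hp'M

theorem Rejects.prefA_lt (hcard : ∀ a, (s.matched a).card ≤ q a)
    (hA : Injective (prefA a)) (h : Rejects q prefA s p a)
    (hp' : p' ∈ (daStep q prefA s).matched a) : prefA a p' < prefA a p := by
  obtain ⟨p₀, rest, -, -, -, hw, heq⟩ := h.daStep_eq hcard
  simp only [heq, update_self, Finset.mem_erase] at hp'
  exact (List.le_of_mem_argmax (Finset.mem_toList.2 hp'.2) hw).lt_of_ne (hA.ne hp'.1)

theorem Rejects.acceptor_eq (hcard : ∀ a, (s.matched a).card ≤ q a)
    (h : Rejects q prefA s p a) (h' : Rejects q prefA s p' a') : a = a' := by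
  obtain ⟨p₀, rest, hnp, hpl, -⟩ := h.daStep_eq hcard
  obtain ⟨p₀', rest', hnp', hpl', -⟩ := h'.daStep_eq hcard
  obtain rfl : p₀ = p₀' := Option.some_inj.1 (hnp.symm.trans hnp')
  exact (List.cons_eq_cons.1 (hpl.symm.trans hpl')).1

end Step

theorem exists_rejectedAt_of_mem_prefP {t : ℕ} {p : Fin np} {a : Fin na} (hmem : a ∈ prefP p)
    (hpend : a ∉ (daIter prefP q prefA t).pending p)
    (hmat : p ∉ (daIter prefP q prefA t).matched a) :
    ∃ u < t, RejectedAt prefP q prefA u p a := by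
  induction t with
  | zero => exact absurd hmem (by simpa [daIter] using hpend)
  | succ t ih =>
    rw [daIter_succ] at hpend hmat
    by_cases h : a ∈ (daIter prefP q prefA t).pending p ∨ p ∈ (daIter prefP q prefA t).matched a
    · exact ⟨t, t.lt_succ_self, rejectedAt_iff_rejects.2 (rejects_of_not_mem_daStep h hpend hmat)⟩
    · push Not at h
      obtain ⟨u, hu, hr⟩ := ih h.1 h.2
      exact ⟨u, hu.trans t.lt_succ_self, hr⟩

/-- Proposers go down their lists in order, and step `t` rejects only at `a`. -/
theorem exists_rejectedAt_lt_of_idxOf_lt (hP : ∀ p, (prefP p).Nodup) {t : ℕ} {p p' : Fin np}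
    {a a' : Fin na} (hrej : RejectedAt prefP q prefA t p a)
    (hp' : p' ∈ (daIter prefP q prefA (t + 1)).matched a)
    (hlt : (prefP p').idxOf a' < (prefP p').idxOf a) :
    ∃ u < t, RejectedAt prefP q prefA u p' a' := by
  have hinv : DAInvariant_s7 prefP q (daIter prefP q prefA (t + 1)) := daInvariant_daIter hP _
  have ha : a ∈ prefP p' := hinv.mem_prefP p' a hp'
  have ha' : a' ∈ prefP p' :=
    List.idxOf_lt_length_iff.1 (hlt.trans (List.idxOf_lt_length_iff.2 ha))
  have hne : a' ≠ a := by rintro rfl; exact hlt.false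
  have hpend : a' ∉ (daIter prefP q prefA (t + 1)).pending p' :=
    List.not_mem_of_idxOf_lt_of_suffix (hP p') (hinv.pending_suffix p') ha
      (hinv.not_mem_pending p' a hp') hlt
  have hmat : p' ∉ (daIter prefP q prefA (t + 1)).matched a' :=
    fun h => hne (hinv.eq_of_mem_matched p' a' a h hp')
  obtain ⟨u, hu, hr⟩ := exists_rejectedAt_of_mem_prefP ha' hpend hmat
  rcases (Nat.lt_succ_iff.1 hu).lt_or_eq with hu | rfl
  · exact ⟨u, hu, hr⟩
  · exact absurd ((rejectedAt_iff_rejects.1 hrej).acceptor_eq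
      (daInvariant_daIter hP u).card_matched_le (rejectedAt_iff_rejects.1 hr)).symm hne

theorem not_mem_of_isStable_of_rejectedAt (hP : ∀ p, (prefP p).Nodup)
    (hA : ∀ a, Injective (prefA a)) {ν : Fin na → Finset (Fin np)}
    (hν : IsStable prefP q prefA ν) {t : ℕ} {p : Fin np} {a : Fin na}
    (hrej : RejectedAt prefP q prefA t p a) : p ∉ ν a := by
  induction t using Nat.strong_induction_on generalizing p a with
  | _ t ih =>
  intro hpν
  obtain ⟨⟨hνcard, -, hνpref⟩, hblock⟩ := hν
  have hcard := (daInvariant_daIter (q := q) (prefA := prefA) hP t).card_matched_le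
  have hr := rejectedAt_iff_rejects.1 hrej
  obtain ⟨p', hp'M, hp'ν⟩ := hr.exists_mem_matched_daStep_not_mem hcard hpν (hνcard a)
  have hp'a : prefA a p' < prefA a p := hr.prefA_lt hcard (hA a) hp'M
  rw [← daIter_succ] at hp'M
  have ha : a ∈ prefP p' := (daInvariant_daIter hP (t + 1)).mem_prefP p' a hp'M
  refine hblock ⟨p', a, ha, hp'ν, fun a' hp'a' => ?_, Or.inr ⟨p, hpν, hp'a⟩⟩
  by_contra! hle
  have hne : a' ≠ a := by rintro rfl; exact hp'ν hp'a'
  have hlt := hle.lt_of_ne ((List.idxOf_inj (hνpref a' p' hp'a')).not.2 hne)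
  obtain ⟨u, hu, hru⟩ := exists_rejectedAt_lt_of_idxOf_lt hP hrej hp'M hlt
  exact ih u hu hru hp'a'

end DeferredAcceptance

theorem rejected_implies_impossible_general (np na : ℕ)
    (prefP : Fin np → List (Fin na)) (q : Fin na → ℕ) (prefA : Fin na → Fin np → ℕ)
    (hP : ∀ p, (prefP p).Nodup) (hA : ∀ a, Function.Injective (prefA a))
    (t : ℕ) (p : Fin np) (a : Fin na)
    (hrej : RejectedAt prefP q prefA t p a) :
    ∀ ν : Fin na → Finset (Fin np), IsStable prefP q prefA ν → p ∉ ν a :=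
  fun _ hν => not_mem_of_isStable_of_rejectedAt hP hA hν hrej

/-- if, during the run of proposer-proposing deferred acceptance, a
proposer `p` is rejected by an acceptor `a` at some step, then `a` is impossible for
`p`: no stable matching pairs `p` with `a`. -/
theorem rejected_implies_impossible (np na : ℕ)
    (prefP : Fin np → List (Fin na)) (q : Fin na → ℕ) (prefA : Fin na → Fin np → ℕ)
    (hP : ∀ p, (prefP p).Nodup) (hA : ∀ a, Function.Injective (prefA a))
    (hq : ∀ a, 0 < q a)
    (t : ℕ) (p : Fin np) (a : Fin na)
    (hrej : RejectedAt prefP q prefA t p a) :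
    ∀ ν : Fin na → Finset (Fin np), IsStable prefP q prefA ν → p ∉ ν a :=
  rejected_implies_impossible_general np na prefP q prefA hP hA t p a hrej
end

section
/- The maximum total weight over feasible relay assignments (the objective Σ x_{i,j} y_j min(c_{i,j}, c''_j) + Σ z_i c'_i subject to the relay, source, and base-station quota constraints) equals the maximum weight of a matching with at most Q_BS edges incident to base-station channel vertices in the associated bipartite graph, and this optimum is computable as a maximum-weight matching after channel duplication. -/
/-- Edge weights of the bipartite graph obtained by duplicating the base station into
`Q` channel vertices: a source–relay edge has the two-hop decode-and-forward weight
`min (c i j) (c'' j)`, and a source–channel edge has the direct weight `c' i`. -/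
def bipWeight (Ns Nr Q : ℕ) (c : Fin Ns → Fin Nr → ℝ) (c'' : Fin Nr → ℝ)
    (c' : Fin Ns → ℝ) (e : Fin Ns × (Fin Nr ⊕ Fin Q)) : ℝ :=
  match e.2 with
  | Sum.inl j => min (c e.1 j) (c'' j)
  | Sum.inr _ => c' e.1

/-- Feasible relay assignment where used relays also count toward the base-station
quota: `x` is a partial matching of sources to relays, `z` the set of directly
connected sources (disjoint from sources using relays), and
(number of used relays) + (number of direct connections) ≤ Q. -/
def Feasible (Ns Nr Q : ℕ) (x : Finset (Fin Ns × Fin Nr)) (z : Finset (Fin Ns)) :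
    Prop :=
  IsMatching x ∧ (∀ i ∈ z, ∀ p ∈ x, (p : Fin Ns × Fin Nr).1 ≠ i) ∧
    x.card + z.card ≤ Q

/-- The objective of a relay assignment. -/
def objective (Ns Nr : ℕ) (c : Fin Ns → Fin Nr → ℝ) (c'' : Fin Nr → ℝ)
    (c' : Fin Ns → ℝ) (x : Finset (Fin Ns × Fin Nr)) (z : Finset (Fin Ns)) : ℝ :=
  (∑ p ∈ x, min (c p.1 p.2) (c'' p.2)) + ∑ i ∈ z, c' i

/-- the maximum total weight over feasible relay assignments equals the
maximum weight of a matching with at most `Q` edges in the bipartite graph obtained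
by channel duplication. -/
theorem relay_assignment_optimum_eq_matching_optimum
    (Ns Nr Q : ℕ) (c : Fin Ns → Fin Nr → ℝ) (c'' : Fin Nr → ℝ) (c' : Fin Ns → ℝ)
    (hc : ∀ i j, 0 ≤ c i j) (hc'' : ∀ j, 0 ≤ c'' j) (hc' : ∀ i, 0 ≤ c' i) :
    sSup {r : ℝ | ∃ (x : Finset (Fin Ns × Fin Nr)) (z : Finset (Fin Ns)),
        Feasible Ns Nr Q x z ∧ r = objective Ns Nr c c'' c' x z} =
    sSup {r : ℝ | ∃ M : Finset (Fin Ns × (Fin Nr ⊕ Fin Q)),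
        IsMatching M ∧ M.card ≤ Q ∧
        r = ∑ e ∈ M, bipWeight Ns Nr Q c c'' c' e} := by
  congr 1
  ext r
  simp only [Set.mem_setOf_eq]
  constructor
  · rintro ⟨x, z, ⟨hxm, hdisj, hq⟩, rfl⟩
    have hzQ : z.card ≤ Q := le_trans (Nat.le_add_left _ _) hq
    set φ : {i // i ∈ z} → Fin Q :=
      fun i => Fin.castLE hzQ ((z.orderIsoOfFin rfl).symm i) with hφ
    have hφinj : Function.Injective φ := fun a b hab =>
      (z.orderIsoOfFin rfl).symm.injective (Fin.castLE_injective hzQ hab)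
    set fA : Fin Ns × Fin Nr → Fin Ns × (Fin Nr ⊕ Fin Q) :=
      fun p => (p.1, Sum.inl p.2) with hfA
    set fB : {i // i ∈ z} → Fin Ns × (Fin Nr ⊕ Fin Q) :=
      fun i => (i.1, Sum.inr (φ i)) with hfB
    have hfAinj : ∀ p ∈ x, ∀ q ∈ x, fA p = fA q → p = q := by
      intro p _ q _ h
      obtain ⟨h1, h2⟩ := Prod.ext_iff.1 h
      exact Prod.ext h1 (Sum.inl_injective h2)
    have hfBinj : ∀ a ∈ z.attach, ∀ b ∈ z.attach, fB a = fB b → a = b := by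
      intro a _ b _ h
      exact Subtype.ext (congrArg Prod.fst h)
    refine ⟨x.image fA ∪ z.attach.image fB, ?_, ?_, ?_⟩
    · -- matching
      intro e he f hf hef
      rcases Finset.mem_union.1 he with heA | heB
      · obtain ⟨p, hp, rfl⟩ := Finset.mem_image.1 heA
        rcases Finset.mem_union.1 hf with hfA' | hfB'
        · obtain ⟨q, hq, rfl⟩ := Finset.mem_image.1 hfA'
          have hpq : p ≠ q := fun h => hef (by rw [h])
          obtain ⟨h1, h2⟩ := hxm p hp q hq hpq
          exact ⟨h1, fun h => h2 (Sum.inl_injective h)⟩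
        · obtain ⟨i, -, rfl⟩ := Finset.mem_image.1 hfB'
          exact ⟨hdisj i.1 i.2 p hp, fun h => Sum.inl_ne_inr h⟩
      · obtain ⟨i, -, rfl⟩ := Finset.mem_image.1 heB
        rcases Finset.mem_union.1 hf with hfA' | hfB'
        · obtain ⟨q, hq, rfl⟩ := Finset.mem_image.1 hfA'
          exact ⟨fun h => hdisj i.1 i.2 q hq h.symm, fun h => Sum.inl_ne_inr h.symm⟩
        · obtain ⟨i', -, rfl⟩ := Finset.mem_image.1 hfB'
          have hii : i ≠ i' := fun h => hef (by rw [h])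
          refine ⟨fun h => hii (Subtype.ext h), fun h => hii (hφinj (Sum.inr_injective h))⟩
    · -- cardinality
      have hdAB : Disjoint (x.image fA) (z.attach.image fB) := by
        rw [Finset.disjoint_left]
        rintro e heA heB
        obtain ⟨p, _, rfl⟩ := Finset.mem_image.1 heA
        obtain ⟨i, -, hie⟩ := Finset.mem_image.1 heB
        exact Sum.inl_ne_inr ((Prod.ext_iff.1 hie).2.symm)
      rw [Finset.card_union_of_disjoint hdAB, Finset.card_image_of_injOn hfAinj,
        Finset.card_image_of_injOn hfBinj, Finset.card_attach]
      exact hq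
    · -- sum
      have hdAB : Disjoint (x.image fA) (z.attach.image fB) := by
        rw [Finset.disjoint_left]
        rintro e heA heB
        obtain ⟨p, _, rfl⟩ := Finset.mem_image.1 heA
        obtain ⟨i, -, hie⟩ := Finset.mem_image.1 heB
        exact Sum.inl_ne_inr ((Prod.ext_iff.1 hie).2.symm)
      rw [Finset.sum_union hdAB, Finset.sum_image hfAinj, Finset.sum_image hfBinj]
      have h1 : ∀ p : Fin Ns × Fin Nr,
          bipWeight Ns Nr Q c c'' c' (fA p) = min (c p.1 p.2) (c'' p.2) := fun p => rfl
      have h2 : ∀ i : {i // i ∈ z},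
          bipWeight Ns Nr Q c c'' c' (fB i) = c' i.1 := fun i => rfl
      simp only [h1, h2, objective]
      congr 1
      exact (Finset.sum_attach z (fun i => c' i)).symm
  · rintro ⟨M, hM, hMQ, rfl⟩
    classical
    set A := M.filter (fun e => e.2.isLeft) with hA
    set B := M.filter (fun e => ¬ e.2.isLeft) with hB
    have hAM : ∀ e ∈ A, e ∈ M := fun e he => (Finset.mem_filter.1 he).1
    have hBM : ∀ e ∈ B, e ∈ M := fun e he => (Finset.mem_filter.1 he).1
    set g : {e // e ∈ A} → Fin Ns × Fin Nr :=
      fun e => (e.1.1, e.1.2.getLeft (Finset.mem_filter.1 e.2).2) with hg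
    have hge : ∀ e : {e // e ∈ A}, (((g e).1, Sum.inl (g e).2) : Fin Ns × (Fin Nr ⊕ Fin Q)) = e.1 := by
      intro e
      exact Prod.ext rfl (Sum.inl_getLeft _ _)
    set x := A.attach.image g with hx
    set z := B.image Prod.fst with hz
    have hxmem : ∀ p ∈ x, (p.1, Sum.inl p.2) ∈ M := by
      intro p hp
      obtain ⟨e, _, rfl⟩ := Finset.mem_image.1 hp
      rw [hge e]
      exact hAM e.1 e.2
    -- first coordinates determine elements of M
    have hfst : ∀ e ∈ M, ∀ f ∈ M, e.1 = f.1 → e = f := by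
      intro e he f hf h
      by_contra hef
      exact (hM e he f hf hef).1 h
    have hginj : ∀ a ∈ A.attach, ∀ b ∈ A.attach, g a = g b → a = b := by
      intro a _ b _ h
      have h1 : a.1.1 = b.1.1 := (Prod.ext_iff.1 h).1
      exact Subtype.ext (hfst a.1 (hAM a.1 a.2) b.1 (hAM b.1 b.2) h1)
    have hzinj : ∀ a ∈ B, ∀ b ∈ B, a.1 = b.1 → a = b := by
      intro a ha b hb h
      exact hfst a (hBM a ha) b (hBM b hb) h
    refine ⟨x, z, ⟨?_, ?_, ?_⟩, ?_⟩
    · -- IsMatching x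
      intro p hp q hq hpq
      have hp' := hxmem p hp
      have hq' := hxmem q hq
      have hne : ((p.1, Sum.inl p.2) : Fin Ns × (Fin Nr ⊕ Fin Q)) ≠ (q.1, Sum.inl q.2) := by
        intro h
        obtain ⟨h1, h2⟩ := Prod.ext_iff.1 h
        exact hpq (Prod.ext h1 (Sum.inl_injective h2))
      obtain ⟨h1, h2⟩ := hM _ hp' _ hq' hne
      exact ⟨h1, fun h => h2 (by simp [h])⟩
    · -- disjointness
      intro i hi p hp hpi
      obtain ⟨e, he, rfl⟩ := Finset.mem_image.1 hi
      have hp' := hxmem p hp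
      have heB := (Finset.mem_filter.1 he).2
      have hne : e ≠ (p.1, Sum.inl p.2) := by
        intro h
        apply heB
        rw [h]
        exact rfl
      exact absurd hpi (fun h => (hM e (hBM e he) _ hp' hne).1 h.symm)
    · -- cardinality
      have hcx : x.card = A.card := by
        rw [hx, Finset.card_image_of_injOn hginj, Finset.card_attach]
      have hcz : z.card = B.card := by
        rw [hz, Finset.card_image_of_injOn hzinj]
      rw [hcx, hcz, hA, hB, Finset.card_filter_add_card_filter_not]
      exact hMQ
    · -- objective value
      have hsplit : A ∪ B = M := Finset.filter_union_filter_not_eq _ M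
      have hd : Disjoint A B := Finset.disjoint_filter_filter_not M M _
      rw [objective, ← hsplit, Finset.sum_union hd]
      congr 1
      · refine Eq.symm ?_
        rw [hx, Finset.sum_image hginj]
        rw [show (∑ e ∈ A.attach, min (c (g e).1 (g e).2) (c'' (g e).2)) =
            ∑ e ∈ A.attach, bipWeight Ns Nr Q c c'' c' e.1 from
          Finset.sum_congr rfl (fun e _ => by rw [← hge e]; rfl)]
        exact Finset.sum_attach A _
      · refine Eq.symm ?_
        rw [hz, Finset.sum_image hzinj]
        refine Finset.sum_congr rfl (fun e he => ?_)
        have heB := (Finset.mem_filter.1 he).2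
        obtain ⟨k, hk⟩ := Sum.isRight_iff.1 (Sum.not_isLeft.1 heB)
        rw [show bipWeight Ns Nr Q c c'' c' e = c' e.1 from by
          unfold bipWeight; rw [hk]]
end

section
/- Any two maximum-weight matchings of the extended graph (original k-cardinality instance extended with A-weighted and 0-weighted edges) restrict to k-edge matchings of the original graph with the same total original weight; consequently, the maximum weight of the extended assignment problem equals [(m−k)+(n−k)]·A plus the optimum of the k-cardinality assignment problem. -/
/-- Maximum-weight perfect matchings of the extended graph. -/
def MaxExtMatching (n m k : ℕ) (w : Fin n → Fin m → ℝ) (A : ℝ)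
    (M : Finset ((Fin n ⊕ Fin (m - k)) × (Fin m ⊕ Fin (n - k)))) : Prop :=
  IsMatching M ∧ M.card = n + (m - k) ∧
  ∀ M' : Finset ((Fin n ⊕ Fin (m - k)) × (Fin m ⊕ Fin (n - k))),
    IsMatching M' → M'.card = n + (m - k) →
    matchWeight (extWeight n m k w A) M' ≤ matchWeight (extWeight n m k w A) M

lemma IsMatching.injOn_fst {α β : Type*} {M : Finset (α × β)} (h : IsMatching M) :
    Set.InjOn Prod.fst (M : Set (α × β)) := by
  intro e he f hf hef
  by_contra hne
  exact (h e he f hf hne).1 hef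

lemma IsMatching.injOn_snd {α β : Type*} {M : Finset (α × β)} (h : IsMatching M) :
    Set.InjOn Prod.snd (M : Set (α × β)) := by
  intro e he f hf hef
  by_contra hne
  exact (h e he f hf hne).2 hef

lemma matching_graph {α β : Type*} [Fintype α] [DecidableEq α] [DecidableEq β]
    (σ : α → β) (hσ : Function.Injective σ) :
    IsMatching ((Finset.univ : Finset α).image (fun x => (x, σ x))) ∧
    ((Finset.univ : Finset α).image (fun x => (x, σ x))).card = Fintype.card α ∧
    ∀ w : α → β → ℝ,
      matchWeight w ((Finset.univ : Finset α).image (fun x => (x, σ x))) = ∑ x, w x (σ x) := by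
  have hinj : Function.Injective (fun x : α => (x, σ x)) := fun a b hab => congrArg Prod.fst hab
  refine ⟨?_, ?_, ?_⟩
  · rintro e he f hf hef
    simp only [Finset.mem_image] at he hf
    obtain ⟨a, _, rfl⟩ := he; obtain ⟨b, _, rfl⟩ := hf
    have hab : a ≠ b := fun h => hef (by rw [h])
    exact ⟨hab, fun h => hab (hσ h)⟩
  · rw [Finset.card_image_of_injective _ hinj, Finset.card_univ]
  · intro w; rw [matchWeight, Finset.sum_image (fun x _ y _ h => hinj h)]

lemma ext_exists (n m k : ℕ) (hkm : k ≤ m) (hkn : k ≤ n)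
    (w : Fin n → Fin m → ℝ) (hw : ∀ i j, 0 ≤ w i j) (A : ℝ)
    (M₀ : Finset (Fin n × Fin m)) (h₀ : IsMatching M₀) (hc : M₀.card ≤ k) :
    ∃ M' : Finset ((Fin n ⊕ Fin (m - k)) × (Fin m ⊕ Fin (n - k))),
      IsMatching M' ∧ M'.card = n + (m - k) ∧
      (((m - k) + (n - k) : ℕ) : ℝ) * A + matchWeight w M₀ ≤
        matchWeight (extWeight n m k w A) M' := by
  classical
  set S : Finset (Fin n) := M₀.image Prod.fst with hSdef
  set T : Finset (Fin m) := M₀.image Prod.snd with hTdef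
  have hScard : S.card = M₀.card := Finset.card_image_of_injOn h₀.injOn_fst
  have hTcard : T.card = M₀.card := Finset.card_image_of_injOn h₀.injOn_snd
  have hSc : Sᶜ.card = n - M₀.card := by
    rw [Finset.card_compl, hScard, Fintype.card_fin]
  have hTc : Tᶜ.card = m - M₀.card := by
    rw [Finset.card_compl, hTcard, Fintype.card_fin]
  obtain ⟨S₁, hS₁sub, hS₁card⟩ : ∃ S₁ ⊆ Sᶜ, S₁.card = n - k :=
    Finset.exists_subset_card_eq (by omega)
  obtain ⟨T₁, hT₁sub, hT₁card⟩ : ∃ T₁ ⊆ Tᶜ, T₁.card = m - k :=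
    Finset.exists_subset_card_eq (by omega)
  set S₂ : Finset (Fin n) := Sᶜ \ S₁ with hS₂def
  set T₂ : Finset (Fin m) := Tᶜ \ T₁ with hT₂def
  have hS₂card : S₂.card = k - M₀.card := by
    rw [hS₂def, Finset.card_sdiff_of_subset hS₁sub, hSc, hS₁card]; omega
  have hT₂card : T₂.card = k - M₀.card := by
    rw [hT₂def, Finset.card_sdiff_of_subset hT₁sub, hTc, hT₁card]; omega
  -- partner function
  have hex : ∀ i : {x // x ∈ S}, ∃ j, ((i : Fin n), j) ∈ M₀ := by
    rintro ⟨i, hi⟩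
    obtain ⟨⟨a, b⟩, he, rfl⟩ := Finset.mem_image.mp hi
    exact ⟨b, he⟩
  choose p hp using hex
  have hpT : ∀ i, p i ∈ T := fun i => Finset.mem_image.mpr ⟨_, hp i, rfl⟩
  have hpinj : Function.Injective p := by
    intro i j hij
    by_contra hne
    have hne' : ((i : Fin n), p i) ≠ ((j : Fin n), p j) := by
      intro h
      exact hne (Subtype.ext (congrArg Prod.fst h))
    exact (h₀ _ (hp i) _ (hp j) hne').2 (by rw [hij])
  let eS₁ : {x // x ∈ S₁} ≃ Fin (n - k) := (Finset.equivFin S₁).trans (finCongr hS₁card)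
  let eT₁ : Fin (m - k) ≃ {x // x ∈ T₁} := (finCongr hT₁card.symm).trans (Finset.equivFin T₁).symm
  let eST : {x // x ∈ S₂} ≃ {x // x ∈ T₂} := Finset.equivOfCardEq (by rw [hS₂card, hT₂card])
  let σL : Fin n → (Fin m ⊕ Fin (n - k)) := fun i =>
    if h : i ∈ S then Sum.inl (p ⟨i, h⟩)
    else if h1 : i ∈ S₁ then Sum.inr (eS₁ ⟨i, h1⟩)
    else Sum.inl ((eST ⟨i, Finset.mem_sdiff.mpr ⟨Finset.mem_compl.mpr h, h1⟩⟩ : {x // x ∈ T₂}) : Fin m)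
  let σ : (Fin n ⊕ Fin (m - k)) → (Fin m ⊕ Fin (n - k)) :=
    Sum.elim σL (fun t => Sum.inl ((eT₁ t : {x // x ∈ T₁}) : Fin m))
  -- disjointness facts on targets
  have hT₁notT : ∀ x ∈ T₁, x ∉ T := fun x hx => Finset.mem_compl.mp (hT₁sub hx)
  have hT₂notT : ∀ x ∈ T₂, x ∉ T := fun x hx =>
    Finset.mem_compl.mp (Finset.mem_sdiff.mp hx).1
  have hT₂notT₁ : ∀ x ∈ T₂, x ∉ T₁ := fun x hx => (Finset.mem_sdiff.mp hx).2
  have hσinj : Function.Injective σ := by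
    rintro (i | t) (i' | t') h
    · -- inl inl
      refine congrArg Sum.inl ?_
      simp only [σ, Sum.elim_inl, σL] at h
      by_cases h1 : i ∈ S
      · by_cases h2 : i' ∈ S
        · rw [dif_pos h1, dif_pos h2] at h
          injection h with h
          exact congrArg Subtype.val (hpinj h)
        · by_cases h3 : i' ∈ S₁
          · rw [dif_pos h1, dif_neg h2, dif_pos h3] at h; simp at h
          · rw [dif_pos h1, dif_neg h2, dif_neg h3] at h
            injection h with h
            exact absurd (h ▸ hpT ⟨i, h1⟩) (hT₂notT _ (eST _).2)
      · by_cases h2 : i ∈ S₁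
        · by_cases h3 : i' ∈ S
          · rw [dif_neg h1, dif_pos h2, dif_pos h3] at h; simp at h
          · by_cases h4 : i' ∈ S₁
            · rw [dif_neg h1, dif_pos h2, dif_neg h3, dif_pos h4] at h
              injection h with h
              exact congrArg Subtype.val (eS₁.injective h)
            · rw [dif_neg h1, dif_pos h2, dif_neg h3, dif_neg h4] at h; simp at h
        · by_cases h3 : i' ∈ S
          · rw [dif_neg h1, dif_neg h2, dif_pos h3] at h
            injection h with h
            exact absurd (h ▸ hpT ⟨i', h3⟩) (hT₂notT _ (eST _).2)
          · by_cases h4 : i' ∈ S₁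
            · rw [dif_neg h1, dif_neg h2, dif_neg h3, dif_pos h4] at h; simp at h
            · rw [dif_neg h1, dif_neg h2, dif_neg h3, dif_neg h4] at h
              injection h with h
              exact congrArg Subtype.val (eST.injective (Subtype.ext h))
    · -- inl inr
      exfalso
      simp only [σ, Sum.elim_inl, Sum.elim_inr, σL] at h
      by_cases h1 : i ∈ S
      · rw [dif_pos h1] at h
        injection h with h
        exact absurd (h ▸ hpT ⟨i, h1⟩) (hT₁notT _ (eT₁ t').2)
      · by_cases h2 : i ∈ S₁
        · rw [dif_neg h1, dif_pos h2] at h; simp at h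
        · rw [dif_neg h1, dif_neg h2] at h
          injection h with h
          exact absurd (eT₁ t').2 (h ▸ hT₂notT₁ _ (eST _).2)
    · -- inr inl
      exfalso
      simp only [σ, Sum.elim_inl, Sum.elim_inr, σL] at h
      replace h := h.symm
      by_cases h1 : i' ∈ S
      · rw [dif_pos h1] at h
        injection h with h
        exact absurd (h ▸ hpT ⟨i', h1⟩) (hT₁notT _ (eT₁ t).2)
      · by_cases h2 : i' ∈ S₁
        · rw [dif_neg h1, dif_pos h2] at h; simp at h
        · rw [dif_neg h1, dif_neg h2] at h
          injection h with h
          exact absurd (eT₁ t).2 (h ▸ hT₂notT₁ _ (eST _).2)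
    · -- inr inr
      simp only [σ, Sum.elim_inr] at h
      injection h with h
      exact congrArg Sum.inr (eT₁.injective (Subtype.ext h))
  obtain ⟨hM', hcard', hwt'⟩ := matching_graph σ hσinj
  refine ⟨_, hM', by rw [hcard']; simp, ?_⟩
  rw [hwt' (extWeight n m k w A)]
  rw [Fintype.sum_sum_type]
  have hright : ∑ t : Fin (m - k), extWeight n m k w A (Sum.inr t) (σ (Sum.inr t))
      = ((m - k : ℕ) : ℝ) * A := by
    have : ∀ t : Fin (m - k), extWeight n m k w A (Sum.inr t) (σ (Sum.inr t)) = A := by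
      intro t; simp only [σ, Sum.elim_inr]; rfl
    rw [Finset.sum_congr rfl (fun t _ => this t), Finset.sum_const, Finset.card_univ]
    simp [nsmul_eq_mul]
  have hsplit : ∑ i : Fin n, extWeight n m k w A (Sum.inl i) (σ (Sum.inl i))
      = ∑ i ∈ S, extWeight n m k w A (Sum.inl i) (σ (Sum.inl i))
        + ∑ i ∈ Sᶜ, extWeight n m k w A (Sum.inl i) (σ (Sum.inl i)) :=
    (Finset.sum_add_sum_compl S _).symm
  have hcsplit : ∑ i ∈ Sᶜ, extWeight n m k w A (Sum.inl i) (σ (Sum.inl i))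
      = ∑ i ∈ S₂, extWeight n m k w A (Sum.inl i) (σ (Sum.inl i))
        + ∑ i ∈ S₁, extWeight n m k w A (Sum.inl i) (σ (Sum.inl i)) :=
    (Finset.sum_sdiff hS₁sub).symm
  have hSsum : ∑ i ∈ S, extWeight n m k w A (Sum.inl i) (σ (Sum.inl i)) = matchWeight w M₀ := by
    rw [← Finset.sum_attach S (fun i => extWeight n m k w A (Sum.inl i) (σ (Sum.inl i)))]
    rw [matchWeight]
    refine Finset.sum_bij (fun i _ => ((i : Fin n), p i)) (fun i _ => hp i) ?_ ?_ ?_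
    · intro a _ b _ hab
      exact Subtype.ext (congrArg Prod.fst hab)
    · intro e he
      have he1 : e.1 ∈ S := Finset.mem_image.mpr ⟨e, he, rfl⟩
      refine ⟨⟨e.1, he1⟩, Finset.mem_attach _ _, ?_⟩
      by_contra hne
      exact (h₀ _ (hp ⟨e.1, he1⟩) _ he (fun hh => hne hh)).1 rfl
    · intro i _
      have : σ (Sum.inl (i : Fin n)) = Sum.inl (p i) := by
        simp only [σ, Sum.elim_inl, σL, dif_pos i.2]
      rw [this]
      rfl
  have hS₁sum : ∑ i ∈ S₁, extWeight n m k w A (Sum.inl i) (σ (Sum.inl i))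
      = ((n - k : ℕ) : ℝ) * A := by
    rw [← Finset.sum_attach S₁ (fun i => extWeight n m k w A (Sum.inl i) (σ (Sum.inl i)))]
    have : ∀ i : {x // x ∈ S₁}, extWeight n m k w A (Sum.inl (i : Fin n)) (σ (Sum.inl i)) = A := by
      rintro ⟨i, hi⟩
      have hnS : i ∉ S := Finset.mem_compl.mp (hS₁sub hi)
      have : σ (Sum.inl i) = Sum.inr (eS₁ ⟨i, hi⟩) := by
        simp only [σ, Sum.elim_inl, σL, dif_neg hnS, dif_pos hi]
      rw [this]; rfl
    rw [Finset.sum_congr rfl (fun i _ => this i), Finset.sum_const]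
    simp [nsmul_eq_mul, hS₁card]
  have hS₂sum : 0 ≤ ∑ i ∈ S₂, extWeight n m k w A (Sum.inl i) (σ (Sum.inl i)) := by
    refine Finset.sum_nonneg ?_
    intro i hi
    have hnS : i ∉ S := Finset.mem_compl.mp (Finset.mem_sdiff.mp hi).1
    have hnS₁ : i ∉ S₁ := (Finset.mem_sdiff.mp hi).2
    have : σ (Sum.inl i) = Sum.inl ((eST ⟨i, Finset.mem_sdiff.mpr
        ⟨Finset.mem_compl.mpr hnS, hnS₁⟩⟩ : {x // x ∈ T₂}) : Fin m) := by
      simp only [σ, Sum.elim_inl, σL, dif_neg hnS, dif_neg hnS₁]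
    rw [this]
    exact hw _ _
  rw [hsplit, hcsplit, hSsum, hS₁sum, hright]
  push_cast
  linarith

lemma struct (n m k : ℕ) (hkm : k ≤ m) (hkn : k ≤ n)
    (w : Fin n → Fin m → ℝ) (hw : ∀ i j, 0 ≤ w i j) (A : ℝ)
    (hA : (∑ i, ∑ j, w i j) < A)
    (M : Finset ((Fin n ⊕ Fin (m - k)) × (Fin m ⊕ Fin (n - k))))
    (hM : MaxExtMatching n m k w A M) :
    (restrictMatching n m k M).card = k ∧
    IsMatching (restrictMatching n m k M) ∧
    matchWeight (extWeight n m k w A) M =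
      (((m - k) + (n - k) : ℕ) : ℝ) * A + matchWeight w (restrictMatching n m k M) := by
  classical
  obtain ⟨hMm, hMcard, hMmax⟩ := hM
  have hw0 : (0:ℝ) ≤ ∑ i, ∑ j, w i j :=
    Finset.sum_nonneg fun i _ => Finset.sum_nonneg fun j _ => hw i j
  have hA0 : 0 ≤ A := le_of_lt (lt_of_le_of_lt hw0 hA)
  have hwA : ∀ i j, w i j < A := by
    intro i j
    refine lt_of_le_of_lt ?_ hA
    calc w i j ≤ ∑ j', w i j' :=
          Finset.single_le_sum (fun j' _ => hw i j') (Finset.mem_univ j)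
      _ ≤ ∑ i', ∑ j', w i' j' :=
          Finset.single_le_sum (fun i' _ => Finset.sum_nonneg fun j' _ => hw i' j')
            (Finset.mem_univ i)
  -- coverage
  have hfstU : M.image Prod.fst = Finset.univ := by
    apply Finset.eq_univ_of_card
    rw [Finset.card_image_of_injOn hMm.injOn_fst, hMcard]
    simp
  have hsndU : M.image Prod.snd = Finset.univ := by
    apply Finset.eq_univ_of_card
    rw [Finset.card_image_of_injOn hMm.injOn_snd, hMcard]
    simp; omega
  have hfst : ∀ x, ∃ y, (x, y) ∈ M := by
    intro x
    have : x ∈ M.image Prod.fst := hfstU ▸ Finset.mem_univ x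
    obtain ⟨⟨a, b⟩, he, rfl⟩ := Finset.mem_image.mp this
    exact ⟨b, he⟩
  have hsnd : ∀ y, ∃ x, (x, y) ∈ M := by
    intro y
    have : y ∈ M.image Prod.snd := hsndU ▸ Finset.mem_univ y
    obtain ⟨⟨a, b⟩, he, rfl⟩ := Finset.mem_image.mp this
    exact ⟨a, he⟩
  -- no inr-inr edge
  have hd : ∀ a b, ((Sum.inr a : Fin n ⊕ Fin (m - k)),
      (Sum.inr b : Fin m ⊕ Fin (n - k))) ∉ M := by
    intro a b hab
    obtain ⟨i, j, hij⟩ : ∃ i j, ((Sum.inl i : Fin n ⊕ Fin (m - k)),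
        (Sum.inl j : Fin m ⊕ Fin (n - k))) ∈ M := by
      by_contra hno
      push_neg at hno
      have hq : ∀ i : Fin n, ∃ b', ((Sum.inl i : Fin n ⊕ Fin (m - k)),
          (Sum.inr b' : Fin m ⊕ Fin (n - k))) ∈ M := by
        intro i
        obtain ⟨y, hy⟩ := hfst (Sum.inl i)
        match y, hy with
        | Sum.inl j, hy => exact absurd hy (hno i j)
        | Sum.inr b', hy => exact ⟨b', hy⟩
      choose q hq using hq
      have hqinj : Function.Injective q := by
        intro i i' hii
        by_contra hne
        have hpair : ((Sum.inl i : Fin n ⊕ Fin (m - k)), (Sum.inr (q i) : Fin m ⊕ Fin (n - k)))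
            ≠ (Sum.inl i', Sum.inr (q i')) := by
          intro hh
          exact hne (Sum.inl_injective (congrArg Prod.fst hh))
        exact (hMm _ (hq i) _ (hq i') hpair).2 (by rw [hii])
      have hqb : ∀ i, q i ≠ b := by
        intro i hqi
        have hpair : ((Sum.inl i : Fin n ⊕ Fin (m - k)), (Sum.inr (q i) : Fin m ⊕ Fin (n - k)))
            ≠ (Sum.inr a, Sum.inr b) := by
          intro hh
          exact Sum.inl_ne_inr (congrArg Prod.fst hh)
        exact (hMm _ (hq i) _ hab hpair).2 (by rw [hqi])
      have hcle : (Finset.univ : Finset (Fin n)).card ≤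
          ((Finset.univ : Finset (Fin (n - k))).erase b).card := by
        apply Finset.card_le_card_of_injOn q
        · intro i _; exact Finset.mem_erase.mpr ⟨hqb i, Finset.mem_univ _⟩
        · intro x _ y _ hxy; exact hqinj hxy
      rw [Finset.card_erase_of_mem (Finset.mem_univ b)] at hcle
      simp only [Finset.card_univ, Fintype.card_fin] at hcle
      have hbpos : 0 < n - k := b.pos
      omega
    -- exchange
    set e₁ := ((Sum.inl i : Fin n ⊕ Fin (m - k)), (Sum.inl j : Fin m ⊕ Fin (n - k))) with he₁
    set e₂ := ((Sum.inr a : Fin n ⊕ Fin (m - k)), (Sum.inr b : Fin m ⊕ Fin (n - k))) with he₂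
    set f₁ := ((Sum.inl i : Fin n ⊕ Fin (m - k)), (Sum.inr b : Fin m ⊕ Fin (n - k))) with hf₁
    set f₂ := ((Sum.inr a : Fin n ⊕ Fin (m - k)), (Sum.inl j : Fin m ⊕ Fin (n - k))) with hf₂
    have he12 : e₁ ≠ e₂ := by simp [he₁, he₂]
    have hf1M : f₁ ∉ M := by
      intro hf
      have hne : f₁ ≠ e₁ := by simp [hf₁, he₁]
      exact (hMm _ hf _ hij hne).1 rfl
    have hf2M : f₂ ∉ M := by
      intro hf
      have hne : f₂ ≠ e₂ := by simp [hf₂, he₂]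
      exact (hMm _ hf _ hab hne).1 rfl
    have hf12 : f₁ ≠ f₂ := by simp [hf₁, hf₂]
    set M' := insert f₁ (insert f₂ ((M.erase e₁).erase e₂)) with hM'def
    have hmem : ∀ g ∈ M', g = f₁ ∨ g = f₂ ∨ (g ∈ M ∧ g ≠ e₁ ∧ g ≠ e₂) := by
      intro g hg
      simp only [hM'def, Finset.mem_insert, Finset.mem_erase] at hg
      tauto
    have hM'm : IsMatching M' := by
      intro g hg g' hg' hgg
      rcases hmem g hg with rfl | rfl | ⟨hgM, hg1, hg2⟩ <;>
        rcases hmem g' hg' with rfl | rfl | ⟨hg'M, hg'1, hg'2⟩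
      · exact absurd rfl hgg
      · exact ⟨by simp [hf₁, hf₂], by simp [hf₁, hf₂]⟩
      · exact ⟨fun hh => (hMm g' hg'M e₁ hij hg'1).1 hh.symm,
          fun hh => (hMm g' hg'M e₂ hab hg'2).2 hh.symm⟩
      · exact ⟨by simp [hf₁, hf₂], by simp [hf₁, hf₂]⟩
      · exact absurd rfl hgg
      · exact ⟨fun hh => (hMm g' hg'M e₂ hab hg'2).1 hh.symm,
          fun hh => (hMm g' hg'M e₁ hij hg'1).2 hh.symm⟩
      · exact ⟨fun hh => (hMm g hgM e₁ hij hg1).1 hh,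
          fun hh => (hMm g hgM e₂ hab hg2).2 hh⟩
      · exact ⟨fun hh => (hMm g hgM e₂ hab hg2).1 hh,
          fun hh => (hMm g hgM e₁ hij hg1).2 hh⟩
      · exact hMm g hgM g' hg'M hgg
    have he2mem : e₂ ∈ M.erase e₁ :=
      Finset.mem_erase.mpr ⟨fun hh => he12 hh.symm, hab⟩
    have hf2notin : f₂ ∉ (M.erase e₁).erase e₂ := fun h =>
      hf2M (Finset.mem_of_mem_erase (Finset.mem_of_mem_erase h))
    have hf1notin : f₁ ∉ insert f₂ ((M.erase e₁).erase e₂) := by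
      intro h
      rcases Finset.mem_insert.mp h with h | h
      · exact hf12 h
      · exact hf1M (Finset.mem_of_mem_erase (Finset.mem_of_mem_erase h))
    have h2le : 2 ≤ M.card := Finset.one_lt_card.mpr ⟨e₁, hij, e₂, hab, he12⟩
    have hM'c : M'.card = n + (m - k) := by
      rw [hM'def, Finset.card_insert_of_notMem hf1notin,
        Finset.card_insert_of_notMem hf2notin,
        Finset.card_erase_of_mem he2mem, Finset.card_erase_of_mem hij]
      omega
    have hwt : matchWeight (extWeight n m k w A) M' =
        matchWeight (extWeight n m k w A) M - w i j + 2 * A := by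
      simp only [matchWeight, hM'def]
      rw [Finset.sum_insert hf1notin, Finset.sum_insert hf2notin,
        Finset.sum_erase_eq_sub he2mem, Finset.sum_erase_eq_sub hij]
      have h1 : extWeight n m k w A f₁.1 f₁.2 = A := rfl
      have h2 : extWeight n m k w A f₂.1 f₂.2 = A := rfl
      have h3 : extWeight n m k w A e₁.1 e₁.2 = w i j := rfl
      have h4 : extWeight n m k w A e₂.1 e₂.2 = 0 := rfl
      rw [h1, h2, h3, h4]
      ring
    have hle := hMmax M' hM'm hM'c
    rw [hwt] at hle
    have := hwA i j
    linarith
  -- counting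
  set Mb := M.filter (fun e => e.2.isRight = true) with hMbdef
  set Mc := M.filter (fun e => e.1.isRight = true) with hMcdef
  set Ma := M.filter (fun e => e.1.isLeft = true ∧ e.2.isLeft = true) with hMadef
  have hMbcard : Mb.card = n - k := by
    have himg : Mb.image Prod.snd = (Finset.univ : Finset (Fin (n - k))).image Sum.inr := by
      ext y
      simp only [Finset.mem_image, Finset.mem_filter, Finset.mem_univ, true_and, hMbdef]
      constructor
      · rintro ⟨e, ⟨heM, hr⟩, rfl⟩
        obtain ⟨b, hb⟩ := Sum.isRight_iff.mp hr
        exact ⟨b, hb.symm⟩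
      · rintro ⟨b, rfl⟩
        obtain ⟨x, hx⟩ := hsnd (Sum.inr b)
        exact ⟨(x, Sum.inr b), ⟨hx, rfl⟩, rfl⟩
    have hc := congrArg Finset.card himg
    rwa [Finset.card_image_of_injOn
        (hMm.injOn_snd.mono (Finset.coe_subset.mpr (Finset.filter_subset _ _))),
      Finset.card_image_of_injective _ Sum.inr_injective,
      Finset.card_univ, Fintype.card_fin] at hc
  have hMccard : Mc.card = m - k := by
    have himg : Mc.image Prod.fst = (Finset.univ : Finset (Fin (m - k))).image Sum.inr := by
      ext x
      simp only [Finset.mem_image, Finset.mem_filter, Finset.mem_univ, true_and, hMcdef]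
      constructor
      · rintro ⟨e, ⟨heM, hr⟩, rfl⟩
        obtain ⟨a, ha⟩ := Sum.isRight_iff.mp hr
        exact ⟨a, ha.symm⟩
      · rintro ⟨a, rfl⟩
        obtain ⟨y, hy⟩ := hfst (Sum.inr a)
        exact ⟨(Sum.inr a, y), ⟨hy, rfl⟩, rfl⟩
    have hc := congrArg Finset.card himg
    rwa [Finset.card_image_of_injOn
        (hMm.injOn_fst.mono (Finset.coe_subset.mpr (Finset.filter_subset _ _))),
      Finset.card_image_of_injective _ Sum.inr_injective,
      Finset.card_univ, Fintype.card_fin] at hc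
  have hU : Ma ∪ Mb ∪ Mc = M := by
    ext ⟨x, y⟩
    rcases x with x | x <;> rcases y with y | y <;>
      simp [hMadef, hMbdef, hMcdef, Finset.mem_filter, Finset.mem_union, hd]
  have hdisj1 : Disjoint Ma Mb := by
    rw [Finset.disjoint_left]
    rintro ⟨x, y⟩ hA' hB'
    simp only [hMadef, hMbdef, Finset.mem_filter] at hA' hB'
    rcases y with y | y <;> simp_all
  have hdisj2 : Disjoint (Ma ∪ Mb) Mc := by
    rw [Finset.disjoint_left]
    rintro ⟨x, y⟩ hA' hB'
    simp only [hMcdef, Finset.mem_filter] at hB'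
    rcases Finset.mem_union.mp hA' with h | h
    · simp only [hMadef, Finset.mem_filter] at h
      rcases x with x | x <;> simp_all
    · simp only [hMbdef, Finset.mem_filter] at h
      rcases x with x | x <;> rcases y with y | y <;> simp_all
  have hcardsum : Ma.card + Mb.card + Mc.card = M.card := by
    rw [← hU, Finset.card_union_of_disjoint hdisj2, Finset.card_union_of_disjoint hdisj1]
  have hMacard : Ma.card = k := by
    rw [hMbcard, hMccard, hMcard] at hcardsum
    omega
  -- restriction
  have hinjpair : Function.Injective (fun p : Fin n × Fin m =>
      ((Sum.inl p.1 : Fin n ⊕ Fin (m - k)), (Sum.inl p.2 : Fin m ⊕ Fin (n - k)))) := by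
    intro p q h
    simp only [Prod.ext_iff, Sum.inl.injEq] at h
    exact Prod.ext h.1 h.2
  have hMaimg : Ma = (restrictMatching n m k M).image
      (fun p => ((Sum.inl p.1 : Fin n ⊕ Fin (m - k)), (Sum.inl p.2 : Fin m ⊕ Fin (n - k)))) := by
    ext ⟨x, y⟩
    rcases x with x | x <;> rcases y with y | y <;>
      simp [hMadef, Finset.mem_filter, restrictMatching, Finset.mem_image, Prod.ext_iff]
  have hrcard : (restrictMatching n m k M).card = k := by
    have h' : Ma.card = (restrictMatching n m k M).card := by
      rw [hMaimg]; exact Finset.card_image_of_injective _ hinjpair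
    omega
  have hrmatch : IsMatching (restrictMatching n m k M) := by
    intro p hp q hq hpq
    have hp' : (Sum.inl p.1, Sum.inl p.2) ∈ M := (Finset.mem_filter.mp hp).2
    have hq' : (Sum.inl q.1, Sum.inl q.2) ∈ M := (Finset.mem_filter.mp hq).2
    have hne : ((Sum.inl p.1 : Fin n ⊕ Fin (m - k)), (Sum.inl p.2 : Fin m ⊕ Fin (n - k)))
        ≠ (Sum.inl q.1, Sum.inl q.2) := fun hh => hpq (hinjpair hh)
    obtain ⟨h1, h2⟩ := hMm _ hp' _ hq' hne
    exact ⟨fun hh => h1 (congrArg Sum.inl hh), fun hh => h2 (congrArg Sum.inl hh)⟩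
  refine ⟨hrcard, hrmatch, ?_⟩
  have hsumsplit : matchWeight (extWeight n m k w A) M =
      (∑ e ∈ Ma, extWeight n m k w A e.1 e.2) + (∑ e ∈ Mb, extWeight n m k w A e.1 e.2)
        + (∑ e ∈ Mc, extWeight n m k w A e.1 e.2) := by
    rw [matchWeight, ← hU, Finset.sum_union hdisj2, Finset.sum_union hdisj1]
  have hsumb : (∑ e ∈ Mb, extWeight n m k w A e.1 e.2) = ((n - k : ℕ) : ℝ) * A := by
    have hconst : ∀ e ∈ Mb, extWeight n m k w A e.1 e.2 = A := by
      rintro ⟨x, y⟩ he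
      simp only [hMbdef, Finset.mem_filter] at he
      obtain ⟨b, rfl⟩ := Sum.isRight_iff.mp he.2
      rcases x with x | x
      · rfl
      · exact absurd he.1 (hd x b)
    rw [Finset.sum_congr rfl hconst, Finset.sum_const, hMbcard, nsmul_eq_mul]
  have hsumc : (∑ e ∈ Mc, extWeight n m k w A e.1 e.2) = ((m - k : ℕ) : ℝ) * A := by
    have hconst : ∀ e ∈ Mc, extWeight n m k w A e.1 e.2 = A := by
      rintro ⟨x, y⟩ he
      simp only [hMcdef, Finset.mem_filter] at he
      obtain ⟨a, rfl⟩ := Sum.isRight_iff.mp he.2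
      rcases y with y | y
      · rfl
      · exact absurd he.1 (hd a y)
    rw [Finset.sum_congr rfl hconst, Finset.sum_const, hMccard, nsmul_eq_mul]
  have hsuma : (∑ e ∈ Ma, extWeight n m k w A e.1 e.2)
      = matchWeight w (restrictMatching n m k M) := by
    rw [hMaimg, Finset.sum_image (fun x _ y _ h => hinjpair h), matchWeight]
    exact Finset.sum_congr rfl fun p _ => rfl
  rw [hsumsplit, hsuma, hsumb, hsumc]
  push_cast
  ring

/-- any two maximum-weight matchings of the extended graph restrict to
`k`-edge matchings of the original graph of the same total original weight, and the
maximum weight of the extended assignment problem equals `((m-k)+(n-k))·A` plus the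
optimum of the `k`-cardinality assignment problem. -/
theorem extended_optimum_decomposition
    (n m k : ℕ) (hk : k ≤ min m n)
    (w : Fin n → Fin m → ℝ) (hw : ∀ i j, 0 ≤ w i j)
    (A : ℝ) (hA : (∑ i, ∑ j, w i j) < A) :
    (∀ M₁ M₂ : Finset ((Fin n ⊕ Fin (m - k)) × (Fin m ⊕ Fin (n - k))),
      MaxExtMatching n m k w A M₁ → MaxExtMatching n m k w A M₂ →
      (restrictMatching n m k M₁).card = k ∧
      matchWeight w (restrictMatching n m k M₁) =
        matchWeight w (restrictMatching n m k M₂)) ∧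
    (∀ M : Finset ((Fin n ⊕ Fin (m - k)) × (Fin m ⊕ Fin (n - k))),
      MaxExtMatching n m k w A M →
      matchWeight (extWeight n m k w A) M =
        (((m - k) + (n - k) : ℕ) : ℝ) * A +
          sSup {r : ℝ | ∃ M₀ : Finset (Fin n × Fin m),
            IsMatching M₀ ∧ M₀.card ≤ k ∧ r = matchWeight w M₀}) := by
  classical
  have hkm : k ≤ m := le_trans hk (min_le_left _ _)
  have hkn : k ≤ n := le_trans hk (min_le_right _ _)
  have hw0 : (0:ℝ) ≤ ∑ i, ∑ j, w i j :=
    Finset.sum_nonneg fun i _ => Finset.sum_nonneg fun j _ => hw i j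
  set Sset : Set ℝ := {r : ℝ | ∃ M₀ : Finset (Fin n × Fin m),
      IsMatching M₀ ∧ M₀.card ≤ k ∧ r = matchWeight w M₀} with hSsetdef
  have hne : Sset.Nonempty := by
    refine ⟨0, ⟨∅, fun e he => absurd he (Finset.notMem_empty e), by simp, by
      simp [matchWeight]⟩⟩
  have hbdd : BddAbove Sset := by
    refine ⟨∑ i, ∑ j, w i j, ?_⟩
    rintro r ⟨M₀, hm, hc, rfl⟩
    calc matchWeight w M₀ = ∑ e ∈ M₀, w e.1 e.2 := rfl
      _ ≤ ∑ e ∈ (Finset.univ : Finset (Fin n × Fin m)), w e.1 e.2 :=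
          Finset.sum_le_sum_of_subset_of_nonneg (Finset.subset_univ _) (fun e _ _ => hw _ _)
      _ = ∑ i, ∑ j, w i j := by
          rw [← Finset.univ_product_univ, Finset.sum_product']
  have hub : ∀ M, MaxExtMatching n m k w A M →
      ∀ r ∈ Sset, r ≤ matchWeight w (restrictMatching n m k M) := by
    intro M hM r hr
    obtain ⟨M₀, hm0, hc0, rfl⟩ := hr
    obtain ⟨hcard, hmatch, hwt⟩ := struct n m k hkm hkn w hw A hA M hM
    obtain ⟨M', hM'm, hM'c, hM'wt⟩ := ext_exists n m k hkm hkn w hw A M₀ hm0 hc0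
    have hle := hM.2.2 M' hM'm hM'c
    rw [hwt] at hle
    linarith
  have hmemS : ∀ M, MaxExtMatching n m k w A M →
      matchWeight w (restrictMatching n m k M) ∈ Sset := by
    intro M hM
    obtain ⟨hcard, hmatch, _⟩ := struct n m k hkm hkn w hw A hA M hM
    exact ⟨restrictMatching n m k M, hmatch, le_of_eq hcard, rfl⟩
  have hsup : ∀ M, MaxExtMatching n m k w A M →
      sSup Sset = matchWeight w (restrictMatching n m k M) := by
    intro M hM
    exact le_antisymm (csSup_le hne (hub M hM)) (le_csSup hbdd (hmemS M hM))
  constructor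
  · intro M₁ M₂ h₁ h₂
    refine ⟨(struct n m k hkm hkn w hw A hA M₁ h₁).1, ?_⟩
    exact (hsup M₁ h₁).symm.trans (hsup M₂ h₂)
  · intro M hM
    obtain ⟨hcard, hmatch, hwt⟩ := struct n m k hkm hkn w hw A hA M hM
    rw [hwt, hsup M hM]
end
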